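/- arXiv:1909.03027 — 11 statements merged into one kernel-verified Lean document; each statement's English description precedes it below -/
import Mathlib

section
/- Let t ≥ 3 and let G be a finite graph containing no copy of K_{2,t} as a subgraph, with minimum degree δ. Then the cop number of G satisfies c(G) ≥ δ/t. -/
/-- `H` has a (not necessarily induced) subgraph copy in `G`: an injective
graph homomorphism from `H` to `G`. -/
def hasSubgraphCopy {W V : Type*} (H : SimpleGraph W) (G : SimpleGraph V) : Prop :=
  ∃ f : W → V, Function.Injective f ∧ ∀ ⦃a b⦄, H.Adj a b → G.Adj (f a) (f b)

/-- The sequence of positions in a play of the cops and robber game, given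
(positional) strategies: cop positions and robber position after `n` rounds.
In each round the cops move first, then the robber moves. -/
def copPlay {V : Type*} {k : ℕ} (init : Fin k → V)
    (cmove : (Fin k → V) → V → (Fin k → V)) (rinit : V)
    (rmove : (Fin k → V) → V → V) : ℕ → (Fin k → V) × V
  | 0 => (init, rinit)
  | n + 1 =>
    let p := copPlay init cmove rinit rmove n
    let c' := cmove p.1 p.2
    (c', rmove c' p.2)

/-- `k` cops have a winning strategy on `G`: there are initial positions and a
move rule for the cops (each cop stays or moves along an edge) such that
against every robber strategy (choice of initial vertex, knowing the cops'
initial positions, and a move rule along edges), at some finite time a cop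
occupies the robber's vertex. -/
def copsWin {V : Type*} (G : SimpleGraph V) (k : ℕ) : Prop :=
  ∃ (init : Fin k → V) (cmove : (Fin k → V) → V → (Fin k → V)),
    (∀ c r i, cmove c r i = c i ∨ G.Adj (c i) (cmove c r i)) ∧
    ∀ (rinit : (Fin k → V) → V) (rmove : (Fin k → V) → V → V),
      (∀ c r, rmove c r = r ∨ G.Adj r (rmove c r)) →
      ∃ n i,
        (copPlay init cmove (rinit init) rmove n).1 i =
            (copPlay init cmove (rinit init) rmove n).2 ∨
          (copPlay init cmove (rinit init) rmove (n + 1)).1 i =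
            (copPlay init cmove (rinit init) rmove n).2

/-- The cop number of a graph: the least number of cops with a winning strategy. -/
noncomputable def copNumber {V : Type*} (G : SimpleGraph V) : ℕ :=
  sInf {k | copsWin G k}

namespace Stmt1Aux

open Finset

section
variable {V : Type*} [Fintype V] [DecidableEq V] {G : SimpleGraph V} [DecidableRel G.Adj] {t : ℕ}

lemma common_nbrs_le
    (hfree : ¬ hasSubgraphCopy (completeBipartiteGraph (Fin 2) (Fin t)) G)
    {u v : V} (huv : u ≠ v) :
    (G.neighborFinset u ∩ G.neighborFinset v).card ≤ t - 1 := by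
  by_contra h
  push_neg at h
  have ht : t ≤ (G.neighborFinset u ∩ G.neighborFinset v).card := by omega
  obtain ⟨s, hs, hcard⟩ := Finset.exists_subset_card_eq ht
  have e := (Finset.equivFinOfCardEq hcard).symm
  apply hfree
  refine ⟨Sum.elim (fun i => if i = 0 then u else v) (fun j => (e j : V)), ?_, ?_⟩
  · have hmem : ∀ j : Fin t, (e j : V) ∈ G.neighborFinset u ∩ G.neighborFinset v :=
      fun j => hs (e j).2
    intro a b hab
    rcases a with i | i <;> rcases b with j | j <;> simp only [Sum.elim_inl, Sum.elim_inr] at hab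
    · congr 1
      fin_cases i <;> fin_cases j <;> simp_all
    · exfalso
      have := hmem j
      rw [Finset.mem_inter, SimpleGraph.mem_neighborFinset, SimpleGraph.mem_neighborFinset] at this
      split_ifs at hab
      · exact this.1.ne' hab.symm
      · exact this.2.ne' hab.symm
    · exfalso
      have := hmem i
      rw [Finset.mem_inter, SimpleGraph.mem_neighborFinset, SimpleGraph.mem_neighborFinset] at this
      split_ifs at hab
      · exact G.irrefl (hab ▸ this.1)
      · exact G.irrefl (hab ▸ this.2)
    · congr 1
      exact e.injective (Subtype.ext hab)
  · intro a b hab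
    rcases a with i | i <;> rcases b with j | j <;>
      simp only [completeBipartiteGraph_adj, Sum.isLeft_inl, Sum.isRight_inl, Sum.isLeft_inr,
        Sum.isRight_inr] at hab <;> try (exfalso; tauto)
    · have := hs (e j).2
      rw [Finset.mem_inter, SimpleGraph.mem_neighborFinset, SimpleGraph.mem_neighborFinset] at this
      simp only [Sum.elim_inl, Sum.elim_inr]
      split_ifs
      · exact this.1
      · exact this.2
    · have := hs (e i).2
      rw [Finset.mem_inter, SimpleGraph.mem_neighborFinset, SimpleGraph.mem_neighborFinset] at this
      simp only [Sum.elim_inl, Sum.elim_inr]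
      split_ifs
      · exact this.1.symm
      · exact this.2.symm

lemma exists_safe (ht1 : 1 ≤ t)
    (hfree : ¬ hasSubgraphCopy (completeBipartiteGraph (Fin 2) (Fin t)) G)
    {k : ℕ} (hlt : k * t < G.minDegree)
    (c : Fin k → V) (r : V) (hc : ∀ i, c i ≠ r) :
    ∃ w, G.Adj r w ∧ ∀ i, w ≠ c i ∧ ¬ G.Adj (c i) w := by
  classical
  set B : Finset V :=
    Finset.univ.biUnion
      (fun i : Fin k => G.neighborFinset r ∩ insert (c i) (G.neighborFinset (c i))) with hB
  have hBcard : B.card ≤ k * t := by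
    calc B.card ≤ ∑ i : Fin k,
        (G.neighborFinset r ∩ insert (c i) (G.neighborFinset (c i))).card :=
          Finset.card_biUnion_le
    _ ≤ ∑ _i : Fin k, t := by
        apply Finset.sum_le_sum
        intro i _
        have hsub : G.neighborFinset r ∩ insert (c i) (G.neighborFinset (c i)) ⊆
            insert (c i) (G.neighborFinset r ∩ G.neighborFinset (c i)) := by
          intro x hx
          rw [Finset.mem_inter, Finset.mem_insert] at hx
          rcases hx.2 with h | h
          · exact Finset.mem_insert.2 (Or.inl h)
          · exact Finset.mem_insert.2 (Or.inr (Finset.mem_inter.2 ⟨hx.1, h⟩))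
        calc _ ≤ (insert (c i) (G.neighborFinset r ∩ G.neighborFinset (c i))).card :=
              Finset.card_le_card hsub
          _ ≤ (G.neighborFinset r ∩ G.neighborFinset (c i)).card + 1 :=
              Finset.card_insert_le _ _
          _ ≤ (t - 1) + 1 := by
              have := common_nbrs_le hfree (Ne.symm (hc i))
              omega
          _ = t := by omega
    _ = k * t := by simp [Finset.sum_const, mul_comm]
  have hBsub : B ⊆ G.neighborFinset r := by
    intro x hx
    rw [hB, Finset.mem_biUnion] at hx
    obtain ⟨i, _, hx⟩ := hx
    exact (Finset.mem_inter.1 hx).1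
  have hdeg : k * t < (G.neighborFinset r).card := by
    rw [G.card_neighborFinset_eq_degree]
    exact lt_of_lt_of_le hlt (G.minDegree_le_degree r)
  have hne : (G.neighborFinset r \ B).Nonempty := by
    rw [← Finset.card_pos, Finset.card_sdiff_of_subset hBsub]
    omega
  obtain ⟨w, hw⟩ := hne
  rw [Finset.mem_sdiff] at hw
  refine ⟨w, (SimpleGraph.mem_neighborFinset _ _ _).1 hw.1, fun i => ?_⟩
  have : w ∉ G.neighborFinset r ∩ insert (c i) (G.neighborFinset (c i)) := by
    intro hmem
    exact hw.2 (Finset.mem_biUnion.2 ⟨i, Finset.mem_univ i, hmem⟩)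
  rw [Finset.mem_inter, Finset.mem_insert, SimpleGraph.mem_neighborFinset,
    SimpleGraph.mem_neighborFinset] at this
  push_neg at this
  have h2 := this ((SimpleGraph.mem_neighborFinset _ _ _).1 hw.1)
  exact h2

end

open Classical in
/-- The greedy robber move: go to a safe neighbour if one exists. -/
noncomputable def robberMove {V : Type*} (G : SimpleGraph V) {k : ℕ}
    (c : Fin k → V) (r : V) : V :=
  if h : ∃ w, G.Adj r w ∧ ∀ i, w ≠ c i ∧ ¬ G.Adj (c i) w then h.choose else r

lemma robberMove_valid {V : Type*} (G : SimpleGraph V) {k : ℕ} :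
    ∀ (c : Fin k → V) (r : V), robberMove G c r = r ∨ G.Adj r (robberMove G c r) := by
  classical
  intro c r
  rw [robberMove]
  split_ifs with h
  · exact Or.inr h.choose_spec.1
  · exact Or.inl rfl

lemma robberMove_spec {V : Type*} (G : SimpleGraph V) {k : ℕ} {c : Fin k → V} {r : V}
    (h : ∃ w, G.Adj r w ∧ ∀ i, w ≠ c i ∧ ¬ G.Adj (c i) w) :
    G.Adj r (robberMove G c r) ∧ ∀ i, robberMove G c r ≠ c i ∧ ¬ G.Adj (c i) (robberMove G c r) := by
  classical
  rw [robberMove, dif_pos h]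
  exact h.choose_spec

section
variable {V : Type*} [Fintype V] {G : SimpleGraph V} [DecidableRel G.Adj] {t : ℕ}

lemma copsWin_card (G : SimpleGraph V) : copsWin G (Fintype.card V) := by
  refine ⟨(Fintype.equivFin V).symm, fun c _ => c, fun _ _ _ => Or.inl rfl, ?_⟩
  intro rinit rmove _
  refine ⟨0, (Fintype.equivFin V) (rinit (Fintype.equivFin V).symm), Or.inl ?_⟩
  simp [copPlay]

lemma copsWin_bound (ht1 : 1 ≤ t)
    (hfree : ¬ hasSubgraphCopy (completeBipartiteGraph (Fin 2) (Fin t)) G)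
    {k : ℕ} (hwin : copsWin G k) : G.minDegree ≤ k * t := by
  classical
  by_contra hlt
  push_neg at hlt
  haveI : Nonempty V := by
    by_contra hV
    rw [not_nonempty_iff] at hV
    have : G.minDegree = 0 := by
      simp [SimpleGraph.minDegree, Finset.univ_eq_empty]
    omega
  obtain ⟨init, cmove, hcmove, hw⟩ := hwin
  -- find a vertex not occupied by any cop
  have hkcard : k < Fintype.card V := by
    have h1 := G.minDegree_le_degree (Classical.arbitrary V)
    have h2 := G.degree_lt_card_verts (Classical.arbitrary V)
    have h3 : k * 1 ≤ k * t := Nat.mul_le_mul_left k ht1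
    omega
  have huex : (Finset.univ \ Finset.univ.image init).Nonempty := by
    rw [← Finset.card_pos, Finset.card_sdiff_of_subset (Finset.subset_univ _)]
    have h1 : (Finset.univ.image init).card ≤ Fintype.card (Fin k) :=
      le_trans Finset.card_image_le (le_of_eq (Finset.card_univ))
    rw [Fintype.card_fin] at h1
    have h2 : Finset.univ.card = Fintype.card V := Finset.card_univ
    omega
  obtain ⟨u, hu⟩ := huex
  rw [Finset.mem_sdiff] at hu
  have hu2 : ∀ i, init i ≠ u := by
    intro i he
    exact hu.2 (Finset.mem_image.2 ⟨i, Finset.mem_univ i, he⟩)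
  obtain ⟨r0, _, hr0⟩ := exists_safe ht1 hfree hlt init u hu2
  obtain ⟨n, i, hcatch⟩ := hw (fun _ => r0) (robberMove G) (robberMove_valid G)
  -- invariant
  have key : ∀ n, (∀ j, (copPlay init cmove r0 (robberMove G) n).1 j ≠
        (copPlay init cmove r0 (robberMove G) n).2 ∧
      ¬ G.Adj ((copPlay init cmove r0 (robberMove G) n).1 j)
        ((copPlay init cmove r0 (robberMove G) n).2)) ∧
      ∀ j, (copPlay init cmove r0 (robberMove G) (n + 1)).1 j ≠
        (copPlay init cmove r0 (robberMove G) n).2 := by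
    intro n
    induction n with
    | zero =>
      have h0 : ∀ j, init j ≠ r0 ∧ ¬ G.Adj (init j) r0 := by
        intro j
        exact ⟨fun he => (hr0 j).1 he.symm, (hr0 j).2⟩
      constructor
      · intro j
        exact h0 j
      · intro j
        have : (copPlay init cmove r0 (robberMove G) 1).1 j =
            cmove init r0 j := rfl
        rw [this]
        show cmove init r0 j ≠ r0
        rcases hcmove init r0 j with h | h
        · rw [h]; exact (h0 j).1
        · intro he; exact (h0 j).2 (he ▸ h)
    | succ m ih =>
      set p := copPlay init cmove r0 (robberMove G) m with hp
      have hc' : ∀ j, cmove p.1 p.2 j ≠ p.2 := ih.2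
      have hex : ∃ w, G.Adj p.2 w ∧ ∀ j, w ≠ cmove p.1 p.2 j ∧
          ¬ G.Adj (cmove p.1 p.2 j) w :=
        exists_safe ht1 hfree hlt (cmove p.1 p.2) p.2 hc'
      have hspec := robberMove_spec G hex
      have hstep : copPlay init cmove r0 (robberMove G) (m + 1) =
          (cmove p.1 p.2, robberMove G (cmove p.1 p.2) p.2) := rfl
      have inv1 : ∀ j, (copPlay init cmove r0 (robberMove G) (m + 1)).1 j ≠
            (copPlay init cmove r0 (robberMove G) (m + 1)).2 ∧
          ¬ G.Adj ((copPlay init cmove r0 (robberMove G) (m + 1)).1 j)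
            ((copPlay init cmove r0 (robberMove G) (m + 1)).2) := by
        intro j
        rw [hstep]
        exact ⟨fun he => (hspec.2 j).1 he.symm, (hspec.2 j).2⟩
      refine ⟨inv1, ?_⟩
      intro j
      have hstep2 : (copPlay init cmove r0 (robberMove G) (m + 2)).1 j =
          cmove (copPlay init cmove r0 (robberMove G) (m+1)).1
            (copPlay init cmove r0 (robberMove G) (m+1)).2 j := rfl
      rw [hstep2]
      rcases hcmove (copPlay init cmove r0 (robberMove G) (m+1)).1
          (copPlay init cmove r0 (robberMove G) (m+1)).2 j with h | h
      · rw [h]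
        exact (inv1 j).1
      · intro he
        exact (inv1 j).2 (he ▸ h)
  rcases hcatch with h | h
  · exact ((key n).1 i).1 h
  · exact (key n).2 i h

lemma copsWin_nonempty (G : SimpleGraph V) : {k | copsWin G k}.Nonempty :=
  ⟨Fintype.card V, copsWin_card G⟩

end

end Stmt1Aux

/-- If `t ≥ 3` and the finite graph `G` is `K_{2,t}`-free with minimum degree `δ`,
then `c(G) ≥ δ / t`. -/
theorem stmt_1 {V : Type*} [Fintype V] (G : SimpleGraph V) [DecidableRel G.Adj]
    (t : ℕ) (ht : 3 ≤ t)
    (hfree : ¬ hasSubgraphCopy (completeBipartiteGraph (Fin 2) (Fin t)) G) :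
    (G.minDegree : ℚ) / t ≤ (copNumber G : ℚ) := by
  classical
  have hmem : copsWin G (copNumber G) := Nat.sInf_mem (Stmt1Aux.copsWin_nonempty G)
  have hb : G.minDegree ≤ copNumber G * t :=
    Stmt1Aux.copsWin_bound (by omega) hfree hmem
  have ht0 : (0 : ℚ) < t := by exact_mod_cast (by omega : 0 < t)
  rw [div_le_iff₀ ht0]
  exact_mod_cast hb
end

section
/- Let G be a finite graph that is K_{2,t}-free for some t ≥ 3, with minimum degree δ. Then for every vertex set C ⊆ V(G) with |C| < δ/t and every vertex v ∉ C, there exists a vertex u in the closed neighborhood N(v) ∪ {v} such that u is not in the closed neighborhood of any vertex of C. -/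
/-- In a finite `K_{2,t}`-free graph (`t ≥ 3`) with minimum degree `δ`, for every
set `C` of fewer than `δ / t` vertices and every `v ∉ C`, some vertex `u` in the
closed neighborhood of `v` is not dominated by `C` (i.e. `u` lies in no closed
neighborhood of a vertex of `C`). -/
theorem stmt_3 {V : Type*} [Fintype V] [DecidableEq V] (G : SimpleGraph V)
    [DecidableRel G.Adj] (t : ℕ) (ht : 3 ≤ t)
    (hfree : ¬ hasSubgraphCopy (completeBipartiteGraph (Fin 2) (Fin t)) G)
    (C : Finset V) (hC : (C.card : ℚ) < (G.minDegree : ℚ) / t)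
    (v : V) (hv : v ∉ C) :
    ∃ u ∈ insert v (G.neighborFinset v), ∀ c ∈ C, u ≠ c ∧ ¬ G.Adj c u := by
  classical
  -- common neighborhood bound
  have hcommon : ∀ c : V, c ≠ v → (G.neighborFinset c ∩ G.neighborFinset v).card ≤ t - 1 := by
    intro c hcv
    by_contra hle
    push_neg at hle
    have ht' : t ≤ (G.neighborFinset c ∩ G.neighborFinset v).card := by omega
    obtain ⟨T, hTsub, hTcard⟩ := Finset.exists_subset_card_eq ht'
    set g : Fin t → V := fun i => ((T.equivFin.symm (Fin.cast hTcard.symm i)) : V) with hg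
    have hmem : ∀ i : Fin t, g i ∈ G.neighborFinset c ∩ G.neighborFinset v :=
      fun i => hTsub (T.equivFin.symm _).2
    have hgc : ∀ i, G.Adj c (g i) := fun i =>
      (SimpleGraph.mem_neighborFinset _ _ _).1 (Finset.mem_inter.1 (hmem i)).1
    have hgv : ∀ i, G.Adj v (g i) := fun i =>
      (SimpleGraph.mem_neighborFinset _ _ _).1 (Finset.mem_inter.1 (hmem i)).2
    have hginj : Function.Injective g := by
      intro i j hij
      have h1 : T.equivFin.symm (Fin.cast hTcard.symm i) = T.equivFin.symm (Fin.cast hTcard.symm j) :=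
        Subtype.coe_injective hij
      have h2 := T.equivFin.symm.injective h1
      exact Fin.ext (by simpa using congrArg Fin.val h2)
    apply hfree
    refine ⟨Sum.elim (fun x : Fin 2 => if x = 0 then c else v) g, ?_, ?_⟩
    · intro a b hab
      match a, b with
      | Sum.inl x, Sum.inl y =>
        simp only [Sum.elim_inl] at hab
        fin_cases x <;> fin_cases y <;> simp_all
      | Sum.inl x, Sum.inr j =>
        exfalso
        simp only [Sum.elim_inl, Sum.elim_inr] at hab
        fin_cases x <;> simp at hab
        · exact G.irrefl (hab ▸ hgc j)
        · exact G.irrefl (hab ▸ hgv j)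
      | Sum.inr i, Sum.inl y =>
        exfalso
        simp only [Sum.elim_inl, Sum.elim_inr] at hab
        fin_cases y <;> simp at hab
        · exact G.irrefl (hab ▸ hgc i)
        · exact G.irrefl (hab ▸ hgv i)
      | Sum.inr i, Sum.inr j =>
        exact congrArg Sum.inr (hginj hab)
    · intro a b hab
      match a, b with
      | Sum.inl x, Sum.inl y => simp at hab
      | Sum.inr i, Sum.inr j => simp at hab
      | Sum.inl x, Sum.inr j =>
        simp only [Sum.elim_inl, Sum.elim_inr]
        fin_cases x <;> simp
        · exact hgc j
        · exact hgv j
      | Sum.inr i, Sum.inl y =>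
        simp only [Sum.elim_inl, Sum.elim_inr]
        fin_cases y <;> simp
        · exact (hgc i).symm
        · exact (hgv i).symm
  by_contra hcon
  push_neg at hcon
  set S := insert v (G.neighborFinset v) with hS
  have hScard : S.card = G.degree v + 1 := by
    rw [hS, Finset.card_insert_of_notMem (by simp), G.card_neighborFinset_eq_degree]
  set B := insert v (C.biUnion fun c => insert c (G.neighborFinset c ∩ G.neighborFinset v)) with hB
  have hsub : S ⊆ B := by
    intro u hu
    obtain ⟨c, hcC, hc⟩ := hcon u hu
    rcases eq_or_ne u c with rfl | hne
    · exact Finset.mem_insert_of_mem (Finset.mem_biUnion.2 ⟨u, hcC, Finset.mem_insert_self _ _⟩)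
    · have hadj : G.Adj c u := hc hne
      rcases Finset.mem_insert.1 hu with rfl | hu'
      · exact Finset.mem_insert_self _ _
      · exact Finset.mem_insert_of_mem (Finset.mem_biUnion.2 ⟨c, hcC,
          Finset.mem_insert_of_mem (Finset.mem_inter.2
            ⟨(G.mem_neighborFinset _ _).2 hadj, hu'⟩)⟩)
  have hBcard : B.card ≤ C.card * t + 1 := by
    calc B.card ≤ (C.biUnion fun c => insert c (G.neighborFinset c ∩ G.neighborFinset v)).card + 1 :=
          Finset.card_insert_le _ _
      _ ≤ (∑ c ∈ C, (insert c (G.neighborFinset c ∩ G.neighborFinset v)).card) + 1 := by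
          gcongr
          exact Finset.card_biUnion_le
      _ ≤ (∑ _c ∈ C, t) + 1 := by
          gcongr with c hcC
          have h1 := hcommon c (by rintro rfl; exact hv hcC)
          have h2 := Finset.card_insert_le c (G.neighborFinset c ∩ G.neighborFinset v)
          omega
      _ = C.card * t + 1 := by rw [Finset.sum_const, smul_eq_mul]
  have hdeg : G.minDegree ≤ G.degree v := G.minDegree_le_degree v
  have hq : (C.card : ℚ) * t < G.minDegree := by
    rwa [lt_div_iff₀ (by positivity)] at hC
  have hn : C.card * t < G.minDegree := by exact_mod_cast hq
  have hcards := Finset.card_le_card hsub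
  omega
end

section
/- Let Γ = Cay(G, S) be a Cayley graph of a finite abelian group G with symmetric generating set S (not containing 0). If every solution in S to a + b + c + d = 0 is 'trivial', i.e., the multiset {a,b,c,d} has the form {s, s', −s, −s'} for some s, s' ∈ S, then Γ contains no subgraph isomorphic to K_{2,3}. -/
lemma pair_lemma {G : Type*} [AddCommGroup G] {a b c d s s' : G}
    (h : ({a, b, c, d} : Multiset G) = {s, s', -s, -s'}) :
    b = -a ∨ c = -a ∨ d = -a := by
  classical
  have ha : a ∈ ({s, s', -s, -s'} : Multiset G) := by rw [← h]; simp
  simp only [Multiset.insert_eq_cons, Multiset.mem_cons, Multiset.mem_singleton] at ha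
  by_contra hcon
  push_neg at hcon
  obtain ⟨hb, hc, hd⟩ := hcon
  have hc2 := congrArg (Multiset.count (-a)) h
  simp only [Multiset.insert_eq_cons, Multiset.count_cons, Multiset.count_singleton] at hc2
  rw [if_neg (Ne.symm hb), if_neg (Ne.symm hc), if_neg (Ne.symm hd)] at hc2
  rcases ha with h' | h' | h' | h' <;> subst h' <;>
    simp only [neg_neg] at hc2 <;> split_ifs at hc2 <;> omega

/-- If in a Cayley graph of a finite abelian group `G` with symmetric generating
set `S` every zero-sum quadruple from `S` is trivial (equal as a multiset to
`{s, s', -s, -s'}`), then the Cayley graph is `K_{2,3}`-free. -/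
theorem stmt_6 {G : Type*} [AddCommGroup G] [Fintype G] (S : Set G)
    (hsym : ∀ s ∈ S, -s ∈ S) (h0 : (0 : G) ∉ S)
    (htriv : ∀ a ∈ S, ∀ b ∈ S, ∀ c ∈ S, ∀ d ∈ S, a + b + c + d = 0 →
      ∃ s ∈ S, ∃ s' ∈ S, ({a, b, c, d} : Multiset G) = {s, s', -s, -s'}) :
    ¬ hasSubgraphCopy (completeBipartiteGraph (Fin 2) (Fin 3))
      (SimpleGraph.fromRel fun g h : G => g - h ∈ S) := by
  classical
  rintro ⟨f, hinj, hadj⟩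
  have key : ∀ (i : Fin 2) (j : Fin 3), f (Sum.inl i) - f (Sum.inr j) ∈ S := by
    intro i j
    have h := hadj (a := Sum.inl i) (b := Sum.inr j) (by simp)
    rw [SimpleGraph.fromRel_adj] at h
    rcases h.2 with h' | h'
    · exact h'
    · simpa [neg_sub] using hsym _ h'
  have pairkey : ∀ j j' : Fin 3, j ≠ j' →
      f (Sum.inr j) + f (Sum.inr j') = f (Sum.inl 0) + f (Sum.inl 1) := by
    intro j j' hjj
    have hx : f (Sum.inl 0) - f (Sum.inr j) ∈ S := key 0 j
    have hy : f (Sum.inr j) - f (Sum.inl 1) ∈ S := by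
      simpa [neg_sub] using hsym _ (key 1 j)
    have hx' : -(f (Sum.inl 0) - f (Sum.inr j')) ∈ S := hsym _ (key 0 j')
    have hy' : -(f (Sum.inr j') - f (Sum.inl 1)) ∈ S := by
      rw [neg_sub]; exact key 1 j'
    obtain ⟨s, hs, s', hs', hM⟩ := htriv _ hx _ hy _ hx' _ hy' (by abel)
    rcases pair_lemma hM with h1 | h2 | h3
    · exfalso
      rw [neg_sub] at h1
      have : f (Sum.inl 1) = f (Sum.inl 0) := sub_right_injective h1
      simpa using hinj this
    · exfalso
      have h2' : f (Sum.inl 0) - f (Sum.inr j') = f (Sum.inl 0) - f (Sum.inr j) :=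
        neg_injective h2
      have : f (Sum.inr j') = f (Sum.inr j) := sub_right_injective h2'
      exact hjj (Sum.inr_injective (hinj this)).symm
    · have h3' : f (Sum.inr j') - f (Sum.inl 1) = f (Sum.inl 0) - f (Sum.inr j) :=
        neg_injective h3
      have := sub_eq_sub_iff_add_eq_add.mp h3'
      rw [add_comm (f (Sum.inr j)) (f (Sum.inr j'))]
      exact this
  have h01 := pairkey 0 1 (by decide)
  have h02 := pairkey 0 2 (by decide)
  have hv : f (Sum.inr 1) = f (Sum.inr 2) := add_left_cancel (h01.trans h02.symm)
  simpa using hinj hv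
end

section
/- Let p ≥ 5 be a prime, s_a = p² + (a² mod p)·p + a for a ∈ {0,…,(p−1)/2}, S⁺ = {s_a}, and S = S⁺ ∪ (−S⁺). Then for any three elements s₁, s₂, s₃ ∈ S, we have 2 ≤ |s₁ + s₂ + s₃| < 6p². -/
/-- `s_a = p² + (a² mod p)·p + a`, as an integer. -/
def sVal (p a : ℕ) : ℤ := (p : ℤ) ^ 2 + ((a ^ 2 % p : ℕ) : ℤ) * p + a

/-- The set `S = S⁺ ∪ (−S⁺)` where `S⁺ = {s_a : 0 ≤ a ≤ (p−1)/2}`. -/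
def sSet (p : ℕ) : Finset ℤ :=
  (Finset.range ((p - 1) / 2 + 1)).image (sVal p) ∪
    (Finset.range ((p - 1) / 2 + 1)).image fun a => -sVal p a

/-- For a prime `p ≥ 5` and any `s₁, s₂, s₃ ∈ S = S⁺ ∪ (−S⁺)`, we have
`2 ≤ |s₁ + s₂ + s₃| < 6p²`. -/
theorem stmt_9 (p : ℕ) (hp : p.Prime) (hp5 : 5 ≤ p) :
    ∀ s₁ ∈ sSet p, ∀ s₂ ∈ sSet p, ∀ s₃ ∈ sSet p,
      2 ≤ |s₁ + s₂ + s₃| ∧ |s₁ + s₂ + s₃| < 6 * (p : ℤ) ^ 2 := by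
  have hpZ : (5 : ℤ) ≤ (p : ℤ) := by exact_mod_cast hp5
  have key : ∀ s ∈ sSet p,
      ((p : ℤ) ^ 2 ≤ s ∧ s ≤ 2 * (p : ℤ) ^ 2 - 2) ∨
      (-(2 * (p : ℤ) ^ 2 - 2) ≤ s ∧ s ≤ -((p : ℤ) ^ 2)) := by
    intro s hs
    have base : ∀ a ∈ Finset.range ((p - 1) / 2 + 1),
        (p : ℤ) ^ 2 ≤ sVal p a ∧ sVal p a ≤ 2 * (p : ℤ) ^ 2 - 2 := by
      intro a ha
      rw [Finset.mem_range, Nat.lt_succ_iff] at ha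
      have hmod : a ^ 2 % p ≤ p - 1 := Nat.le_sub_one_of_lt
        (Nat.mod_lt _ (by omega))
      have hmodZ : ((a ^ 2 % p : ℕ) : ℤ) ≤ (p : ℤ) - 1 := by
        have : ((a ^ 2 % p : ℕ) : ℤ) ≤ ((p - 1 : ℕ) : ℤ) := by exact_mod_cast hmod
        omega
      have hmodZ0 : (0:ℤ) ≤ ((a ^ 2 % p : ℕ) : ℤ) := Int.natCast_nonneg _
      have ha2 : 2 * a ≤ p - 1 := by omega
      have haZ : 2 * (a : ℤ) ≤ (p : ℤ) - 1 := by
        have : ((2*a : ℕ) : ℤ) ≤ ((p - 1 : ℕ) : ℤ) := by exact_mod_cast ha2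
        push_cast at this; omega
      have haZ0 : (0:ℤ) ≤ (a : ℤ) := Int.natCast_nonneg _
      unfold sVal
      constructor
      · nlinarith
      · nlinarith
    rw [sSet, Finset.mem_union] at hs
    rcases hs with hs | hs
    · rw [Finset.mem_image] at hs
      obtain ⟨a, ha, rfl⟩ := hs
      exact Or.inl (base a ha)
    · rw [Finset.mem_image] at hs
      obtain ⟨a, ha, rfl⟩ := hs
      have := base a ha
      exact Or.inr ⟨by linarith [this.2], by linarith [this.1]⟩
  intro s₁ h₁ s₂ h₂ s₃ h₃
  have k₁ := key s₁ h₁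
  have k₂ := key s₂ h₂
  have k₃ := key s₃ h₃
  have hp2 : (2:ℤ) ≤ (p:ℤ)^2 := by nlinarith
  constructor
  · rw [le_abs]
    rcases k₁ with ⟨a₁,b₁⟩|⟨a₁,b₁⟩ <;> rcases k₂ with ⟨a₂,b₂⟩|⟨a₂,b₂⟩ <;>
      rcases k₃ with ⟨a₃,b₃⟩|⟨a₃,b₃⟩
    · left; linarith
    · left; linarith
    · left; linarith
    · right; linarith
    · left; linarith
    · right; linarith
    · right; linarith
    · right; linarith
  · rw [abs_lt]
    rcases k₁ with ⟨a₁,b₁⟩|⟨a₁,b₁⟩ <;> rcases k₂ with ⟨a₂,b₂⟩|⟨a₂,b₂⟩ <;>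
      rcases k₃ with ⟨a₃,b₃⟩|⟨a₃,b₃⟩ <;> constructor <;> linarith
end

section
/- Let p ≥ 5 be a prime, s_a = p² + (a² mod p)·p + a for a ∈ {0,…,(p−1)/2}, and S = {±s_a}. If s₁ ≥ s₂ ≥ s₃ ≥ s₄ are elements of S (as integers) with s₁ + s₂ + s₃ + s₄ = 0, then s₁ = −s₄ and s₂ = −s₃. -/
lemma sVal_lb (p a : ℕ) : (p:ℤ)^2 ≤ sVal p a := by
  have h1 : (0:ℤ) ≤ ((a ^ 2 % p : ℕ) : ℤ) * p := by positivity
  have h2 : (0:ℤ) ≤ (a:ℤ) := by positivity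
  unfold sVal; linarith

lemma sVal_ub (p a : ℕ) (hp5 : 5 ≤ p) (ha : a ≤ (p-1)/2) :
    sVal p a ≤ 2*(p:ℤ)^2 - 2 := by
  have hr : a ^ 2 % p + 1 ≤ p := Nat.mod_lt _ (by omega)
  have hrz : ((a ^ 2 % p : ℕ) : ℤ) ≤ (p:ℤ) - 1 := by omega
  have hrz0 : (0:ℤ) ≤ ((a ^ 2 % p : ℕ) : ℤ) := by positivity
  have haz : (a:ℤ) ≤ (p:ℤ) - 2 := by
    have h2 : a + 2 ≤ p := by omega
    omega
  have hpz : (5:ℤ) ≤ (p:ℤ) := by exact_mod_cast hp5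
  have hmul : ((a ^ 2 % p : ℕ) : ℤ) * p ≤ ((p:ℤ) - 1) * p := by
    apply mul_le_mul_of_nonneg_right hrz (by linarith)
  unfold sVal; nlinarith

lemma mem_sSet (p : ℕ) {s : ℤ} (hs : s ∈ sSet p) :
    ∃ a, a ≤ (p-1)/2 ∧ (s = sVal p a ∨ s = -sVal p a) := by
  simp only [sSet, Finset.mem_union, Finset.mem_image, Finset.mem_range] at hs
  rcases hs with ⟨a, ha, rfl⟩ | ⟨a, ha, rfl⟩
  · exact ⟨a, by omega, Or.inl rfl⟩
  · exact ⟨a, by omega, Or.inr rfl⟩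

lemma nat_eq_of_zmod_eq (p : ℕ) [NeZero p] {a c : ℕ} (ha : a < p) (hc : c < p)
    (h : (a : ZMod p) = (c : ZMod p)) : a = c := by
  have h1 := ZMod.val_cast_of_lt ha
  have h2 := ZMod.val_cast_of_lt hc
  rw [h] at h1; omega

lemma key (p : ℕ) (hp : p.Prime) (hp5 : 5 ≤ p) {a b c d : ℕ}
    (ha : a ≤ (p-1)/2) (hb : b ≤ (p-1)/2) (hc : c ≤ (p-1)/2) (hd : d ≤ (p-1)/2)
    (h : sVal p a + sVal p b = sVal p c + sVal p d) :
    (a = c ∧ b = d) ∨ (a = d ∧ b = c) := by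
  haveI := Fact.mk hp
  have hodd : p % 2 = 1 := Nat.odd_iff.mp (hp.odd_of_ne_two (by omega))
  have hab : a + b < p := by omega
  have hcd : c + d < p := by omega
  -- the equation over ℕ
  have hnat : a^2 % p * p + a + (b^2 % p * p + b) = c^2 % p * p + c + (d^2 % p * p + d) := by
    have h' : ((a^2 % p * p + a + (b^2 % p * p + b) : ℕ) : ℤ)
        = ((c^2 % p * p + c + (d^2 % p * p + d) : ℕ) : ℤ) := by
      unfold sVal at h; push_cast at h ⊢; linarith
    exact_mod_cast h'
  have hE : (a^2 % p + b^2 % p) * p + (a + b) = (c^2 % p + d^2 % p) * p + (c + d) := by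
    rw [add_mul, add_mul]; linarith
  have hsum : a + b = c + d := by
    have h1 : ((a^2 % p + b^2 % p) * p + (a + b)) % p = (a+b) % p := by
      rw [add_comm, Nat.add_mul_mod_self_right]
    have h2 : ((c^2 % p + d^2 % p) * p + (c + d)) % p = (c+d) % p := by
      rw [add_comm, Nat.add_mul_mod_self_right]
    rw [hE, h2] at h1
    rw [Nat.mod_eq_of_lt hab, Nat.mod_eq_of_lt hcd] at h1
    omega
  have hXY : a^2 % p + b^2 % p = c^2 % p + d^2 % p := by
    have : (a^2 % p + b^2 % p) * p = (c^2 % p + d^2 % p) * p := by omega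
    exact Nat.eq_of_mul_eq_mul_right (by omega) this
  -- pass to ZMod p
  have hA : (a : ZMod p)^2 + (b : ZMod p)^2 = (c : ZMod p)^2 + (d : ZMod p)^2 := by
    have h' : ((a^2 % p + b^2 % p : ℕ) : ZMod p) = ((c^2 % p + d^2 % p : ℕ) : ZMod p) := by
      exact_mod_cast congrArg (Nat.cast : ℕ → ZMod p) hXY
    push_cast [ZMod.natCast_mod] at h'
    exact h'
  have hS : (a : ZMod p) + (b : ZMod p) = (c : ZMod p) + (d : ZMod p) := by
    exact_mod_cast congrArg (Nat.cast : ℕ → ZMod p) hsum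
  have hfact : (2 : ZMod p) * (((a : ZMod p) - c) * ((a : ZMod p) - d)) = 0 := by
    linear_combination hA + ((a : ZMod p) - b - c - d) * hS
  have h2ne : (2 : ZMod p) ≠ 0 := by
    intro h2
    have : ((2:ℕ) : ZMod p) = 0 := by exact_mod_cast h2
    rw [ZMod.natCast_eq_zero_iff] at this
    have := Nat.le_of_dvd (by norm_num) this
    omega
  have hcases := mul_eq_zero.mp ((mul_eq_zero.mp hfact).resolve_left h2ne)
  rcases hcases with h0 | h0
  · left
    have hac : a = c := nat_eq_of_zmod_eq p (by omega) (by omega) (by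
      have := sub_eq_zero.mp h0; exact_mod_cast this)
    exact ⟨hac, by omega⟩
  · right
    have had : a = d := nat_eq_of_zmod_eq p (by omega) (by omega) (by
      have := sub_eq_zero.mp h0; exact_mod_cast this)
    exact ⟨had, by omega⟩

/-- For a prime `p ≥ 5`, if `s₁ ≥ s₂ ≥ s₃ ≥ s₄` are elements of
`S = S⁺ ∪ (−S⁺)` with `s₁ + s₂ + s₃ + s₄ = 0`, then `s₁ = −s₄` and `s₂ = −s₃`. -/
theorem stmt_10 (p : ℕ) (hp : p.Prime) (hp5 : 5 ≤ p) :
    ∀ s₁ ∈ sSet p, ∀ s₂ ∈ sSet p, ∀ s₃ ∈ sSet p, ∀ s₄ ∈ sSet p,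
      s₂ ≤ s₁ → s₃ ≤ s₂ → s₄ ≤ s₃ → s₁ + s₂ + s₃ + s₄ = 0 →
        s₁ = -s₄ ∧ s₂ = -s₃ := by
  intro s₁ h₁ s₂ h₂ s₃ h₃ s₄ h₄ h21 h32 h43 hsum
  obtain ⟨a, ha, hsa⟩ := mem_sSet p h₁
  obtain ⟨b, hb, hsb⟩ := mem_sSet p h₂
  obtain ⟨c, hc, hsc⟩ := mem_sSet p h₃
  obtain ⟨d, hd, hsd⟩ := mem_sSet p h₄
  have hP : (25:ℤ) ≤ (p:ℤ)^2 := by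
    have : (5:ℤ) ≤ (p:ℤ) := by exact_mod_cast hp5
    nlinarith
  have lba := sVal_lb p a; have lbb := sVal_lb p b
  have lbc := sVal_lb p c; have lbd := sVal_lb p d
  have uba := sVal_ub p a hp5 ha; have ubb := sVal_ub p b hp5 hb
  have ubc := sVal_ub p c hp5 hc; have ubd := sVal_ub p d hp5 hd
  -- determine signs
  have hA1 : s₁ = sVal p a := by
    rcases hsa with h | h
    · exact h
    · exfalso; linarith
  have hA4 : s₄ = -sVal p d := by
    rcases hsd with h | h
    · exfalso; linarith
    · exact h
  have hA2 : s₂ = sVal p b := by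
    rcases hsb with h | h
    · exact h
    · exfalso; linarith
  have hA3 : s₃ = -sVal p c := by
    rcases hsc with h | h
    · exfalso; linarith
    · exact h
  subst hA1; subst hA2; subst hA3; subst hA4
  have heq : sVal p a + sVal p b = sVal p c + sVal p d := by linarith
  rcases key p hp hp5 ha hb hc hd heq with ⟨rfl, rfl⟩ | ⟨rfl, rfl⟩
  · constructor <;> linarith
  · constructor <;> linarith
end

section
/- Let p ≥ 5 be a prime, n ≥ 8p² an integer, S = {±(p² + (a² mod p)p + a) : 0 ≤ a ≤ (p−1)/2} ⊆ ℤ_n, and S₁ = S ∪ {1, −1}. Then the Cayley graph Cay(ℤ_n, S₁) contains no triangle and no subgraph isomorphic to K_{2,4}. -/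
open Pointwise SimpleGraph

lemma eq_or_eq_of_add_eq_add_of_sq_add_sq_eq {R : Type*} [CommRing R] [NoZeroDivisors R]
    (h2 : (2 : R) ≠ 0) {a b c d : R} (h : a + b = c + d) (hsq : a ^ 2 + b ^ 2 = c ^ 2 + d ^ 2) :
    a = c ∨ a = d := by
  have : 2 * ((a - c) * (a - d)) = 0 := by linear_combination hsq - (b + c + d - a) * h
  simpa [h2, sub_eq_zero] using this

lemma Nat.eq_and_eq_of_add_mul_eq_add_mul {p a b x y : ℕ} (ha : a < p) (hb : b < p)
    (h : a + p * x = b + p * y) : a = b ∧ x = y := by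
  obtain ⟨hx, ha'⟩ := (Nat.div_mod_unique (a.zero_le.trans_lt ha)).2 ⟨h, ha⟩
  obtain ⟨hy, hb'⟩ := (Nat.div_mod_unique (a.zero_le.trans_lt ha)).2 ⟨rfl, hb⟩
  exact ⟨ha'.symm.trans hb', hx.symm.trans hy⟩

lemma Int.eq_of_cast_eq_of_abs_sub_lt {n : ℕ} {x y : ℤ} (h : (x : ZMod n) = y)
    (hxy : |x - y| < n) : x = y :=
  sub_eq_zero.1 <|
    Int.eq_zero_of_abs_lt_dvd ((ZMod.intCast_eq_intCast_iff_dvd_sub _ _ _).1 h.symm) hxy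

section SignedSums

variable {A : Set ℤ}

lemma exists_eq_or_eq_neg_of_mem_union_neg {x : ℤ} (hx : x ∈ A ∪ -A) :
    ∃ a ∈ A, x = a ∨ x = -a := by
  rcases hx with hx | hx
  · exact ⟨x, hx, Or.inl rfl⟩
  · exact ⟨-x, hx, Or.inr (neg_neg x).symm⟩

lemma neg_mem_union_neg {x : ℤ} (hx : x ∈ A ∪ -A) : -x ∈ A ∪ -A := by
  rcases hx with hx | hx
  · exact Or.inr (by rwa [Set.mem_neg, neg_neg])
  · exact Or.inl hx

lemma abs_lt_of_mem_union_neg {B : ℤ} (hA : ∀ a ∈ A, 0 < a ∧ a < B) {x : ℤ}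
    (hx : x ∈ A ∪ -A) : |x| < B := by
  rcases hx with hx | hx
  · have := hA x hx
    exact abs_lt.2 ⟨by linarith, this.2⟩
  · have : 0 < -x ∧ -x < B := hA (-x) hx
    exact abs_lt.2 ⟨by linarith, by linarith⟩

-- In each sign pattern the relation is excluded by positivity or is a forbidden relation in `A`.
lemma add_add_ne_zero_of_mem_union_neg (hpos : ∀ a ∈ A, 0 < a)
    (hfree : ∀ a ∈ A, ∀ b ∈ A, ∀ c ∈ A, a + b ≠ c) {x y z : ℤ}
    (hx : x ∈ A ∪ -A) (hy : y ∈ A ∪ -A) (hz : z ∈ A ∪ -A) : x + y + z ≠ 0 := by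
  obtain ⟨a, ha, rfl | rfl⟩ := exists_eq_or_eq_neg_of_mem_union_neg hx <;>
  obtain ⟨b, hb, rfl | rfl⟩ := exists_eq_or_eq_neg_of_mem_union_neg hy <;>
  obtain ⟨c, hc, rfl | rfl⟩ := exists_eq_or_eq_neg_of_mem_union_neg hz <;>
  grind

lemma eq_or_eq_of_add_eq_add_of_mem_union_neg (hpos : ∀ a ∈ A, 0 < a)
    (hfree : ∀ a ∈ A, ∀ b ∈ A, ∀ c ∈ A, ∀ d ∈ A, a + b + c ≠ d)
    (hsidon : ∀ a ∈ A, ∀ b ∈ A, ∀ c ∈ A, ∀ d ∈ A, a + b = c + d → a = c ∨ a = d)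
    {x y z w : ℤ} (hx : x ∈ A ∪ -A) (hy : y ∈ A ∪ -A) (hz : z ∈ A ∪ -A) (hw : w ∈ A ∪ -A)
    (h : x + y = z + w) (hne : x + y ≠ 0) : x = z ∨ x = w := by
  obtain ⟨a, ha, rfl | rfl⟩ := exists_eq_or_eq_neg_of_mem_union_neg hx <;>
  obtain ⟨b, hb, rfl | rfl⟩ := exists_eq_or_eq_neg_of_mem_union_neg hy <;>
  obtain ⟨c, hc, rfl | rfl⟩ := exists_eq_or_eq_neg_of_mem_union_neg hz <;>
  obtain ⟨d, hd, rfl | rfl⟩ := exists_eq_or_eq_neg_of_mem_union_neg hw <;>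
  grind

end SignedSums

section InsertOne

variable {P : Set ℤ} {q : ℤ}

lemma pos_and_lt_of_mem_insert_one (hq : 0 < q) (hP : ∀ s ∈ P, q ≤ s ∧ s + 3 ≤ 2 * q) :
    ∀ a ∈ insert 1 P, 0 < a ∧ a < 2 * q := by
  rintro a (rfl | ha) <;> grind

lemma add_ne_of_mem_insert_one (hq : 2 < q) (hP : ∀ s ∈ P, q ≤ s ∧ s + 3 ≤ 2 * q)
    (hgap : ∀ s ∈ P, ∀ t ∈ P, s + 1 ≠ t ∧ s + 2 ≠ t) :
    ∀ a ∈ insert 1 P, ∀ b ∈ insert 1 P, ∀ c ∈ insert 1 P, a + b ≠ c := by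
  rintro a (rfl | ha) b (rfl | hb) c (rfl | hc) <;> grind

lemma add_add_ne_of_mem_insert_one (hq : 3 < q) (hP : ∀ s ∈ P, q ≤ s ∧ s + 3 ≤ 2 * q)
    (hgap : ∀ s ∈ P, ∀ t ∈ P, s + 1 ≠ t ∧ s + 2 ≠ t) :
    ∀ a ∈ insert 1 P, ∀ b ∈ insert 1 P, ∀ c ∈ insert 1 P, ∀ d ∈ insert 1 P, a + b + c ≠ d := by
  rintro a (rfl | ha) b (rfl | hb) c (rfl | hc) d (rfl | hd) <;> grind

lemma eq_or_eq_of_add_eq_add_of_mem_insert_one (hq : 1 < q) (hP : ∀ s ∈ P, q ≤ s ∧ s + 3 ≤ 2 * q)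
    (hsidon : ∀ a ∈ P, ∀ b ∈ P, ∀ c ∈ P, ∀ d ∈ P, a + b = c + d → a = c ∨ a = d) :
    ∀ a ∈ insert 1 P, ∀ b ∈ insert 1 P, ∀ c ∈ insert 1 P, ∀ d ∈ insert 1 P,
      a + b = c + d → a = c ∨ a = d := by
  rintro a (rfl | ha) b (rfl | hb) c (rfl | hc) d (rfl | hd) <;> grind

end InsertOne

section SVal

variable {p a b c d : ℕ}

def sPos (p : ℕ) : Set ℤ := sVal p '' Set.Iic ((p - 1) / 2)

lemma sVal_eq_natCast (p a : ℕ) : sVal p a = ((a + p * (p + a ^ 2 % p) : ℕ) : ℤ) := by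
  unfold sVal; push_cast; ring

lemma sVal_bounds (hp5 : 5 ≤ p) (ha : a ≤ (p - 1) / 2) :
    (p : ℤ) ^ 2 ≤ sVal p a ∧ sVal p a + 3 ≤ 2 * (p : ℤ) ^ 2 := by
  have hm : a ^ 2 % p + 1 ≤ p := Nat.mod_lt _ (by omega)
  have hpa : a + 3 ≤ p := by omega
  have hpm := Nat.mul_le_mul_left p hm
  rw [sVal_eq_natCast]
  constructor
  · have : p ^ 2 ≤ a + p * (p + a ^ 2 % p) := by nlinarith [Nat.zero_le (p * (a ^ 2 % p))]
    exact_mod_cast this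
  · have : a + p * (p + a ^ 2 % p) + 3 ≤ 2 * p ^ 2 := by nlinarith
    exact_mod_cast this

lemma sVal_add_ne_sVal (hp : p.Prime) (ha : a ≤ (p - 1) / 2) (hb : b ≤ (p - 1) / 2) {k : ℕ}
    (hk : 0 < k) (hak : a + k < p) : sVal p a + k ≠ sVal p b := by
  have := Fact.mk hp
  intro h
  rw [sVal_eq_natCast, sVal_eq_natCast] at h
  have h' : (a + k) + p * (p + a ^ 2 % p) = b + p * (p + b ^ 2 % p) := by
    rw [add_right_comm]; exact_mod_cast h
  obtain ⟨rfl, hm⟩ := Nat.eq_and_eq_of_add_mul_eq_add_mul hak (by omega) h'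
  have hsq : (a : ZMod p) ^ 2 = ((a + k : ℕ) : ZMod p) ^ 2 := by
    simpa only [ZMod.natCast_mod, Nat.cast_pow] using
      congrArg (fun m : ℕ => (m : ZMod p)) (Nat.add_left_cancel hm)
  rcases sq_eq_sq_iff_eq_or_eq_neg.1 hsq with hab | hab
  · have := CharP.natCast_injOn_Iio (ZMod p) p (show a < p by omega) hak hab
    omega
  · have hdvd : p ∣ a + (a + k) := (ZMod.natCast_eq_zero_iff _ _).1 (by
      rw [Nat.cast_add, hab, neg_add_cancel])
    have := Nat.eq_zero_of_dvd_of_lt hdvd (by omega)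
    omega

lemma eq_or_eq_of_sVal_add_sVal_eq (hp : p.Prime) (hp2 : p ≠ 2) (ha : a ≤ (p - 1) / 2)
    (hb : b ≤ (p - 1) / 2) (hc : c ≤ (p - 1) / 2) (hd : d ≤ (p - 1) / 2)
    (h : sVal p a + sVal p b = sVal p c + sVal p d) : a = c ∨ a = d := by
  have := Fact.mk hp
  have := hp.two_le
  simp only [sVal_eq_natCast] at h
  have h' : (a + b) + p * ((p + a ^ 2 % p) + (p + b ^ 2 % p)) =
      (c + d) + p * ((p + c ^ 2 % p) + (p + d ^ 2 % p)) := by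
    have : a + p * (p + a ^ 2 % p) + (b + p * (p + b ^ 2 % p)) =
        c + p * (p + c ^ 2 % p) + (d + p * (p + d ^ 2 % p)) := by exact_mod_cast h
    linarith
  obtain ⟨hsum, hm⟩ := Nat.eq_and_eq_of_add_mul_eq_add_mul (by omega) (by omega) h'
  have hsq : (a : ZMod p) ^ 2 + (b : ZMod p) ^ 2 = (c : ZMod p) ^ 2 + (d : ZMod p) ^ 2 := by
    simpa only [Nat.cast_add, ZMod.natCast_mod, Nat.cast_pow] using
      congrArg (fun m : ℕ => (m : ZMod p))
        (show a ^ 2 % p + b ^ 2 % p = c ^ 2 % p + d ^ 2 % p by omega)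
  have h2 : (2 : ZMod p) ≠ 0 := Ring.two_ne_zero (by rwa [ZMod.ringChar_zmod_n])
  refine (eq_or_eq_of_add_eq_add_of_sq_add_sq_eq h2
    (by rw [← Nat.cast_add, ← Nat.cast_add, hsum]) hsq).imp ?_ ?_ <;>
    exact CharP.natCast_injOn_Iio (ZMod p) p (show _ < p by omega) (show _ < p by omega)

lemma sPos_bounds (hp5 : 5 ≤ p) : ∀ s ∈ sPos p, (p : ℤ) ^ 2 ≤ s ∧ s + 3 ≤ 2 * (p : ℤ) ^ 2 := by
  rintro _ ⟨a, ha, rfl⟩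
  exact sVal_bounds hp5 ha

lemma add_one_ne_and_add_two_ne_of_mem_sPos (hp : p.Prime) (hp5 : 5 ≤ p) :
    ∀ s ∈ sPos p, ∀ t ∈ sPos p, s + 1 ≠ t ∧ s + 2 ≠ t := by
  rintro _ ⟨a, ha, rfl⟩ _ ⟨b, hb, rfl⟩
  have ha' : a ≤ (p - 1) / 2 := ha
  exact ⟨mod_cast sVal_add_ne_sVal (k := 1) hp ha hb (by norm_num) (by omega),
    mod_cast sVal_add_ne_sVal (k := 2) hp ha hb (by norm_num) (by omega)⟩

lemma eq_or_eq_of_add_eq_add_of_mem_sPos (hp : p.Prime) (hp2 : p ≠ 2) :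
    ∀ s ∈ sPos p, ∀ t ∈ sPos p, ∀ u ∈ sPos p, ∀ v ∈ sPos p, s + t = u + v → s = u ∨ s = v := by
  rintro _ ⟨a, ha, rfl⟩ _ ⟨b, hb, rfl⟩ _ ⟨c, hc, rfl⟩ _ ⟨d, hd, rfl⟩ h
  rcases eq_or_eq_of_sVal_add_sVal_eq hp hp2 ha hb hc hd h with rfl | rfl <;> simp

lemma coe_sSet (p : ℕ) : (sSet p : Set ℤ) = sPos p ∪ -sPos p := by
  ext x
  simp [sSet, sPos, neg_eq_iff_eq_neg]

lemma image_sSet_union_one_neg_one (p n : ℕ) :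
    ((↑) '' (sSet p : Set ℤ) ∪ {1, -1} : Set (ZMod n)) =
      (↑) '' (insert 1 (sPos p) ∪ -insert 1 (sPos p)) := by
  ext x
  simp only [coe_sSet, Set.neg_insert, Set.mem_union, Set.mem_image, Set.mem_insert_iff]
  aesop

end SVal

lemma fromRel_sub_mem_eq_addCayley {M : Type*} [AddCommGroup M] (s : Set M) :
    fromRel (fun g h : M => g - h ∈ s) = addCayley s := by
  ext u v
  simp [addCayley_adj, neg_add_eq_sub, or_comm]

lemma not_hasSubgraphCopy_completeBipartiteGraph_two_four {V : Type*} [Add V]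
    [IsLeftCancelAdd V] {G : SimpleGraph V}
    (h : ∀ u₀ u₁ v₀ v₁, u₀ ≠ u₁ → G.Adj u₀ v₀ → G.Adj u₀ v₁ → G.Adj u₁ v₀ → G.Adj u₁ v₁ →
      v₀ = v₁ ∨ v₀ + v₁ = u₀ + u₁) :
    ¬ hasSubgraphCopy (completeBipartiteGraph (Fin 2) (Fin 4)) G := by
  rintro ⟨f, hf, hadj⟩
  have adj (i : Fin 2) (j : Fin 4) : G.Adj (f (.inl i)) (f (.inr j)) := hadj (by simp)
  have hu : f (.inl 0) ≠ f (.inl 1) := hf.ne (by simp)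
  have hv (j k : Fin 4) (hjk : j ≠ k) : f (.inr j) ≠ f (.inr k) := hf.ne (by simpa)
  obtain h₁ | h₁ := h _ _ _ _ hu (adj 0 0) (adj 0 1) (adj 1 0) (adj 1 1)
  · exact hv 0 1 (by decide) h₁
  obtain h₂ | h₂ := h _ _ _ _ hu (adj 0 0) (adj 0 2) (adj 1 0) (adj 1 2)
  · exact hv 0 2 (by decide) h₂
  exact hv 1 2 (by decide) (add_left_cancel (h₁.trans h₂.symm))

section IntCastCayley

variable {n : ℕ} {T : Set ℤ}

lemma exists_intCast_eq_sub_of_adj (hT : ∀ t ∈ T, -t ∈ T) {u v : ZMod n}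
    (h : (addCayley ((↑) '' T : Set (ZMod n))).Adj u v) : ∃ t ∈ T, (t : ZMod n) = u - v := by
  rcases ((addCayley_adj _ u v).1 h).2 with ⟨t, ht, htvu⟩ | ⟨t, ht, htuv⟩
  · exact ⟨-t, hT t ht, by rw [Int.cast_neg, htvu]; abel⟩
  · exact ⟨t, ht, by rw [htuv]; abel⟩

lemma cliqueFree_three_addCayley_intCast (hT : ∀ t ∈ T, -t ∈ T) {B : ℤ}
    (hB : ∀ t ∈ T, |t| < B) (hn : 3 * B ≤ n)
    (hsum : ∀ x ∈ T, ∀ y ∈ T, ∀ z ∈ T, x + y + z ≠ 0) :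
    (addCayley ((↑) '' T : Set (ZMod n))).CliqueFree 3 := by
  intro s hs
  obtain ⟨u, v, w, huv, huw, hvw, -⟩ := is3Clique_iff.1 hs
  obtain ⟨x, hx, hxuv⟩ := exists_intCast_eq_sub_of_adj hT huv
  obtain ⟨y, hy, hyvw⟩ := exists_intCast_eq_sub_of_adj hT hvw
  obtain ⟨z, hz, hzwu⟩ := exists_intCast_eq_sub_of_adj hT huw.symm
  refine hsum x hx y hy z hz (Int.eq_of_cast_eq_of_abs_sub_lt (n := n) ?_ ?_)
  · push_cast
    rw [hxuv, hyvw, hzwu]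
    abel
  · have := abs_lt.1 (hB x hx); have := abs_lt.1 (hB y hy); have := abs_lt.1 (hB z hz)
    rw [sub_zero, abs_lt]
    constructor <;> linarith

lemma eq_or_add_eq_add_of_adj_addCayley_intCast (hT : ∀ t ∈ T, -t ∈ T) {B : ℤ}
    (hB : ∀ t ∈ T, |t| < B) (hn : 4 * B ≤ n)
    (hrigid : ∀ x ∈ T, ∀ y ∈ T, ∀ z ∈ T, ∀ w ∈ T, x + y = z + w → x + y ≠ 0 → x = z ∨ x = w)
    {u₀ u₁ v₀ v₁ : ZMod n} (hu : u₀ ≠ u₁)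
    (h₀₀ : (addCayley ((↑) '' T : Set (ZMod n))).Adj u₀ v₀)
    (h₀₁ : (addCayley ((↑) '' T : Set (ZMod n))).Adj u₀ v₁)
    (h₁₀ : (addCayley ((↑) '' T : Set (ZMod n))).Adj u₁ v₀)
    (h₁₁ : (addCayley ((↑) '' T : Set (ZMod n))).Adj u₁ v₁) :
    v₀ = v₁ ∨ v₀ + v₁ = u₀ + u₁ := by
  obtain ⟨x, hx, hx'⟩ := exists_intCast_eq_sub_of_adj hT h₀₀
  obtain ⟨z, hz, hz'⟩ := exists_intCast_eq_sub_of_adj hT h₀₁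
  obtain ⟨y, hy, hy'⟩ := exists_intCast_eq_sub_of_adj hT h₁₀
  obtain ⟨w, hw, hw'⟩ := exists_intCast_eq_sub_of_adj hT h₁₁
  have hxy : ((x - y : ℤ) : ZMod n) = u₀ - u₁ := by push_cast; rw [hx', hy']; abel
  have hsum : x + -y = z + -w := by
    have hzw : ((z - w : ℤ) : ZMod n) = u₀ - u₁ := by push_cast; rw [hz', hw']; abel
    have := abs_lt.1 (hB x hx); have := abs_lt.1 (hB y hy)
    have := abs_lt.1 (hB z hz); have := abs_lt.1 (hB w hw)
    have := Int.eq_of_cast_eq_of_abs_sub_lt (hxy.trans hzw.symm)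
      (abs_lt.2 ⟨by linarith, by linarith⟩)
    linarith
  have hne : x + -y ≠ 0 := by
    intro h
    rw [← sub_eq_add_neg] at h
    rw [h, Int.cast_zero, eq_comm, sub_eq_zero] at hxy
    exact hu hxy
  rcases hrigid x hx (-y) (hT y hy) z hz (-w) (hT w hw) hsum hne with rfl | rfl
  · left
    rw [hx'] at hz'
    exact sub_right_injective hz'
  · right
    push_cast at hx'
    linear_combination hx' + hw'

end IntCastCayley

/-- For a prime `p ≥ 5` and `n ≥ 8p²`, with
`S₁ = {±s_a : 0 ≤ a ≤ (p−1)/2} ∪ {1, −1} ⊆ ℤ_n`, the Cayley graph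
`Cay(ℤ_n, S₁)` is triangle-free and `K_{2,4}`-free. -/
theorem stmt_11 (p n : ℕ) (hp : p.Prime) (hp5 : 5 ≤ p) (hn : 8 * p ^ 2 ≤ n) :
    ((SimpleGraph.fromRel fun g h : ZMod n =>
        g - h ∈ ((fun x : ℤ => (x : ZMod n)) '' (sSet p : Set ℤ) ∪ {1, -1})).CliqueFree 3) ∧
      ¬ hasSubgraphCopy (completeBipartiteGraph (Fin 2) (Fin 4))
        (SimpleGraph.fromRel fun g h : ZMod n =>
          g - h ∈ ((fun x : ℤ => (x : ZMod n)) '' (sSet p : Set ℤ) ∪ {1, -1})) := by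
  have hq : (3 : ℤ) < (p : ℤ) ^ 2 := by nlinarith [(show (5 : ℤ) ≤ p by exact_mod_cast hp5)]
  have hn' : 4 * (2 * (p : ℤ) ^ 2) ≤ n := by
    have : ((8 * p ^ 2 : ℕ) : ℤ) ≤ n := by exact_mod_cast hn
    push_cast at this
    linarith
  have hP := sPos_bounds hp5
  have hgap := add_one_ne_and_add_two_ne_of_mem_sPos hp hp5
  have hA := pos_and_lt_of_mem_insert_one (by positivity) hP
  have hpos a ha := (hA a ha).1
  have hsym : ∀ t ∈ insert 1 (sPos p) ∪ -insert 1 (sPos p),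
      -t ∈ insert 1 (sPos p) ∪ -insert 1 (sPos p) := fun _ => neg_mem_union_neg
  have hB : ∀ t ∈ insert 1 (sPos p) ∪ -insert 1 (sPos p), |t| < 2 * (p : ℤ) ^ 2 :=
    fun _ => abs_lt_of_mem_union_neg hA
  rw [fromRel_sub_mem_eq_addCayley, image_sSet_union_one_neg_one]
  constructor
  · exact cliqueFree_three_addCayley_intCast hsym hB (by linarith) fun _ hx _ hy _ hz =>
      add_add_ne_zero_of_mem_union_neg hpos (add_ne_of_mem_insert_one (by linarith) hP hgap)
        hx hy hz
  · exact not_hasSubgraphCopy_completeBipartiteGraph_two_four fun _ _ _ _ =>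
      eq_or_add_eq_add_of_adj_addCayley_intCast hsym hB hn' fun _ hx _ hy _ hz _ hw =>
        eq_or_eq_of_add_eq_add_of_mem_union_neg hpos (add_add_ne_of_mem_insert_one hq hP hgap)
          (eq_or_eq_of_add_eq_add_of_mem_insert_one (by linarith) hP
            (eq_or_eq_of_add_eq_add_of_mem_sPos hp (by omega))) hx hy hz hw
end

section
/- Let q be an odd prime power, F = GF(q²), and S = {s ∈ F : s^{q+1} = 1}. For any two distinct elements d₁, d₂ ∈ F, the number of x ∈ F satisfying (x − d₁)^{q+1} = 1 and (x − d₂)^{q+1} = 1 is at most 2. Consequently, the Cayley graph Cay((F,+), S) is K_{2,3}-free. -/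
/-- Let `q` be an odd prime power, `F` the field with `q²` elements, and
`S = {s : s^{q+1} = 1}`. Any two distinct `d₁, d₂ ∈ F` have at most `2` common
solutions of `(x−d₁)^{q+1} = 1 = (x−d₂)^{q+1}`; consequently, `Cay((F,+), S)`
is `K_{2,3}`-free. -/
theorem stmt_13 (q : ℕ) (hodd : Odd q) (hq : IsPrimePow q)
    (F : Type*) [Field F] [Fintype F] (hF : Fintype.card F = q ^ 2) :
    (∀ d₁ d₂ : F, d₁ ≠ d₂ →
        Set.ncard {x : F | (x - d₁) ^ (q + 1) = 1 ∧ (x - d₂) ^ (q + 1) = 1} ≤ 2) ∧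
      ¬ hasSubgraphCopy (completeBipartiteGraph (Fin 2) (Fin 3))
        (SimpleGraph.fromRel fun g h : F => g - h ∈ {s : F | s ^ (q + 1) = 1}) := by
  classical
  -- Step 0: characteristic and Frobenius additivity
  obtain ⟨p, k, hp, hk, hpk⟩ := hq
  have hpp : p.Prime := hp.nat_prime
  haveI : Fact p.Prime := ⟨hpp⟩
  set r := ringChar F with hr
  haveI : CharP F r := ringChar.charP F
  have hr_prime : r.Prime := (CharP.char_is_prime F r)
  obtain ⟨n, hn_prime, hn⟩ := FiniteField.card F r
  have hrp : r = p := by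
    have h1 : r ∣ p ^ (k * 2) := by
      have : r ∣ Fintype.card F := hn ▸ dvd_pow_self r n.pos.ne'
      rwa [hF, ← hpk, ← pow_mul] at this
    exact (Nat.prime_dvd_prime_iff_eq hr_prime hpp).mp (hr_prime.dvd_of_dvd_pow h1)
  haveI : CharP F p := hrp ▸ (ringChar.charP F)
  have hfrob : ∀ a b : F, (a + b) ^ q = a ^ q + b ^ q := by
    intro a b
    rw [← hpk]
    exact add_pow_char_pow a b p k
  -- Step 1: the quantitative bound
  have key : ∀ d₁ d₂ : F, d₁ ≠ d₂ →
      Set.ncard {x : F | (x - d₁) ^ (q + 1) = 1 ∧ (x - d₂) ^ (q + 1) = 1} ≤ 2 := by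
    intro d₁ d₂ hne
    set c : F := d₁ - d₂ with hc
    have hc0 : c ≠ 0 := sub_ne_zero.mpr hne
    set P : Polynomial F :=
      Polynomial.C (c ^ q) * Polynomial.X ^ 2 + Polynomial.C (c ^ (q + 1)) * Polynomial.X +
        Polynomial.C c with hP
    have hPdeg : P.natDegree = 2 := Polynomial.natDegree_quadratic (pow_ne_zero _ hc0)
    have hP0 : P ≠ 0 := by
      intro h
      rw [h, Polynomial.natDegree_zero] at hPdeg
      exact two_ne_zero hPdeg.symm
    have hsub : {x : F | (x - d₁) ^ (q + 1) = 1 ∧ (x - d₂) ^ (q + 1) = 1} ⊆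
        (· + d₁) '' {y : F | P.IsRoot y} := by
      rintro x ⟨h1, h2⟩
      refine ⟨x - d₁, ?_, by ring⟩
      set y : F := x - d₁ with hy
      have hxd2 : x - d₂ = y + c := by rw [hy, hc]; ring
      rw [hxd2] at h2
      rw [pow_succ] at h1 h2
      rw [hfrob] at h2
      show P.eval y = 0
      have heval : P.eval y = c ^ q * y ^ 2 + c ^ (q + 1) * y + c := by
        simp [hP]
      rw [heval, pow_succ c]
      linear_combination y * h2 - (y + c) * h1
    calc Set.ncard {x : F | (x - d₁) ^ (q + 1) = 1 ∧ (x - d₂) ^ (q + 1) = 1}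
        ≤ Set.ncard ((· + d₁) '' {y : F | P.IsRoot y}) :=
          Set.ncard_le_ncard hsub (Set.toFinite _)
      _ ≤ Set.ncard {y : F | P.IsRoot y} := by
          rw [Set.ncard_image_of_injective _ (add_left_injective d₁)]
      _ ≤ 2 := by
          have hset : {y : F | P.IsRoot y} = ↑P.roots.toFinset := by
            ext y
            simp [Polynomial.mem_roots, hP0]
          rw [hset, Set.ncard_coe_finset]
          calc P.roots.toFinset.card ≤ Multiset.card P.roots :=
                P.roots.toFinset_card_le
            _ ≤ P.natDegree := P.card_roots'
            _ = 2 := hPdeg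
  refine ⟨key, ?_⟩
  -- Step 2: K_{2,3}-freeness
  rintro ⟨f, hinj, hadj⟩
  set d₁ : F := f (Sum.inl 0) with hd1
  set d₂ : F := f (Sum.inl 1) with hd2
  have hne : d₁ ≠ d₂ := hinj.ne (by simp)
  have hqeven : Even (q + 1) := hodd.add_one
  have hmem : ∀ i : Fin 3, f (Sum.inr i) ∈
      {x : F | (x - d₁) ^ (q + 1) = 1 ∧ (x - d₂) ^ (q + 1) = 1} := by
    intro i
    have h1 := hadj (show (completeBipartiteGraph (Fin 2) (Fin 3)).Adj (Sum.inl 0) (Sum.inr i)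
      by simp)
    have h2 := hadj (show (completeBipartiteGraph (Fin 2) (Fin 3)).Adj (Sum.inl 1) (Sum.inr i)
      by simp)
    rw [SimpleGraph.fromRel_adj] at h1 h2
    constructor
    · rcases h1.2 with h | h
      · have := h
        simp only [Set.mem_setOf_eq] at this
        rw [← neg_sub, hqeven.neg_pow] at this
        exact this
      · exact h
    · rcases h2.2 with h | h
      · have := h
        simp only [Set.mem_setOf_eq] at this
        rw [← neg_sub, hqeven.neg_pow] at this
        exact this
      · exact h
  have h3 : ({f (Sum.inr 0), f (Sum.inr 1), f (Sum.inr 2)} : Set F).ncard = 3 := by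
    rw [Set.ncard_eq_three]
    exact ⟨_, _, _, hinj.ne (by simp), hinj.ne (by simp), hinj.ne (by simp), rfl⟩
  have hsub : ({f (Sum.inr 0), f (Sum.inr 1), f (Sum.inr 2)} : Set F) ⊆
      {x : F | (x - d₁) ^ (q + 1) = 1 ∧ (x - d₂) ^ (q + 1) = 1} := by
    rintro x (rfl | rfl | rfl)
    · exact hmem 0
    · exact hmem 1
    · exact hmem 2
  have := Set.ncard_le_ncard hsub (Set.toFinite _)
  rw [h3] at this
  have := le_trans this (key d₁ d₂ hne)
  omega
end

section
/- Let q be an odd prime power, F = GF(q²), S = {s ∈ F : s^{q+1} = 1}. If a₁, b₁, a₂, b₂ ∈ S with a₁ ≠ −b₁, a₂ ≠ −b₂, and {a₁, b₁} ≠ {a₂, b₂} (as unordered pairs), then a₁ + b₁ ≠ a₂ + b₂. -/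
/-- Let `q` be an odd prime power, `F` the field with `q²` elements, and
`S = {s : s^{q+1} = 1}`. If `a₁, b₁, a₂, b₂ ∈ S` with `a₁ ≠ −b₁`, `a₂ ≠ −b₂` and
`{a₁, b₁} ≠ {a₂, b₂}` as unordered pairs, then `a₁ + b₁ ≠ a₂ + b₂`. -/
theorem stmt_14 (q : ℕ) (hodd : Odd q) (hq : IsPrimePow q)
    (F : Type*) [Field F] [Fintype F] (hF : Fintype.card F = q ^ 2)
    (a₁ b₁ a₂ b₂ : F)
    (ha₁ : a₁ ^ (q + 1) = 1) (hb₁ : b₁ ^ (q + 1) = 1)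
    (ha₂ : a₂ ^ (q + 1) = 1) (hb₂ : b₂ ^ (q + 1) = 1)
    (h₁ : a₁ ≠ -b₁) (h₂ : a₂ ≠ -b₂)
    (hne : ({a₁, b₁} : Multiset F) ≠ {a₂, b₂}) :
    a₁ + b₁ ≠ a₂ + b₂ := by
  intro hsum
  obtain ⟨p, k, hp, hk, hpk⟩ := hq
  have hp' : Nat.Prime p := hp.nat_prime
  -- identify the characteristic
  haveI : CharP F (ringChar F) := ringChar.charP F
  obtain ⟨n, hr, hcard⟩ := FiniteField.card F (ringChar F)
  have hrq : p = ringChar F := by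
    have hdvd : p ∣ ringChar F ^ (n : ℕ) := by
      rw [← hcard, hF, ← hpk, ← pow_mul]
      exact dvd_pow_self p (by positivity)
    exact ((Nat.prime_dvd_prime_iff_eq hp' hr).mp (hp'.dvd_of_dvd_pow hdvd))
  haveI : CharP F p := hrq ▸ ringChar.charP F
  haveI : Fact p.Prime := ⟨hp'⟩
  -- nonzero
  have ne0 : ∀ x : F, x ^ (q + 1) = 1 → x ≠ 0 := by
    intro x hx h0
    rw [h0, zero_pow (Nat.succ_ne_zero q)] at hx
    exact zero_ne_one hx
  have ha₁0 := ne0 _ ha₁; have hb₁0 := ne0 _ hb₁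
  have ha₂0 := ne0 _ ha₂; have hb₂0 := ne0 _ hb₂
  -- x^q = x⁻¹
  have inv : ∀ x : F, x ^ (q + 1) = 1 → x ^ q = x⁻¹ := by
    intro x hx
    have h : x ^ q * x = 1 := by rw [← pow_succ]; exact hx
    exact eq_inv_of_mul_eq_one_left h
  -- Frobenius additivity
  have frob : ∀ x y : F, (x + y) ^ q = x ^ q + y ^ q := by
    intro x y
    rw [← hpk]
    exact add_pow_char_pow x y p k
  have e1 : a₁⁻¹ + b₁⁻¹ = (a₁ + b₁) ^ q := by
    rw [frob, inv _ ha₁, inv _ hb₁]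
  have e2 : a₂⁻¹ + b₂⁻¹ = (a₂ + b₂) ^ q := by
    rw [frob, inv _ ha₂, inv _ hb₂]
  have hs0 : a₁ + b₁ ≠ 0 := fun h => h₁ (by linear_combination h)
  have einv : a₁⁻¹ + b₁⁻¹ = a₂⁻¹ + b₂⁻¹ := by rw [e1, e2, hsum]
  have hprod : a₁ * b₁ = a₂ * b₂ := by
    field_simp at einv
    have hs0' : a₂ + b₂ ≠ 0 := hsum ▸ hs0
    -- einv : (b₁ + a₁) * (a₂ * b₂) = (b₂ + a₂) * (a₁ * b₁) (roughly)
    have key : (a₁ + b₁) * (a₂ * b₂) = (a₂ + b₂) * (a₁ * b₁) := by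
      linear_combination einv
    rw [← hsum] at key
    exact (mul_left_cancel₀ hs0 key).symm
  have key : (a₂ - a₁) * (a₂ - b₁) = 0 := by
    linear_combination hprod - a₂ * hsum
  rcases mul_eq_zero.mp key with h | h
  · have ha : a₂ = a₁ := by linear_combination h
    have hb : b₂ = b₁ := by linear_combination -hsum - h
    exact hne (by rw [ha, hb])
  · have ha : a₂ = b₁ := by linear_combination h
    have hb : b₂ = a₁ := by linear_combination -hsum - h
    rw [ha, hb] at hne
    exact hne (Multiset.pair_comm a₁ b₁)
end

section
/- Let q be an odd prime power, F = GF(q²), and S = {s ∈ F : s^{q+1} = 1}. Then S generates the additive group of F; equivalently, the Cayley graph Cay((F,+), S) is connected. -/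
/-!
The additive subgroup generated by the monoid `S` of `(q+1)`-st roots of unity is closed under
multiplication, hence a subring, hence (in a finite field) a subfield `K`. Since `q + 1 ∣ q² - 1`,
`S` has `q + 1` elements, so `|K| > q`; as `q² = |K|^[F : K]`, this forces `K = F`. Connectivity
of the Cayley graph is the same statement: every vertex is joined to `0` by a walk whose steps
are the generators of the sum representing it.
-/

theorem SimpleGraph.connected_fromRel_sub_mem_of_closure_eq_top {G : Type*} [AddGroup G]
    {S : Set G} (hS : AddSubgroup.closure S = ⊤) :
    (SimpleGraph.fromRel fun g h : G => g - h ∈ S).Connected := by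
  set Γ := SimpleGraph.fromRel fun g h : G => g - h ∈ S
  have reachable_add : ∀ s ∈ S, ∀ y, Γ.Reachable (s + y) y := by
    intro s hs y
    rcases eq_or_ne s 0 with rfl | hs0
    · rw [zero_add]
    · refine SimpleGraph.Adj.reachable ((SimpleGraph.fromRel_adj _ _ _).2 ⟨?_, Or.inl ?_⟩)
      · simpa using hs0
      · simp [hs]
  have reachable_neg_add : ∀ s ∈ S, ∀ y, Γ.Reachable (-s + y) y := fun s hs y => by
    simpa using (reachable_add s hs (-s + y)).symm
  have reachable_zero : ∀ x : G, Γ.Reachable x 0 := fun x => by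
    induction (hS ▸ AddSubgroup.mem_top x : x ∈ AddSubgroup.closure S)
      using AddSubgroup.closure_induction_left with
    | zero => rfl
    | add_left s hs y _ ih => exact (reachable_add s hs y).trans ih
    | neg_add_cancel s hs y _ ih => exact (reachable_neg_add s hs y).trans ih
  have : Nonempty G := ⟨0⟩
  exact ⟨fun u v => (reachable_zero u).trans (reachable_zero v).symm⟩

theorem Subring.toAddSubgroup_closure_submonoid {R : Type*} [Ring R] (M : Submonoid R) :
    (Subring.closure (M : Set R)).toAddSubgroup = AddSubgroup.closure (M : Set R) := by
  ext x
  rw [Subring.mem_toAddSubgroup, Subring.mem_closure_iff, Submonoid.closure_eq]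

namespace FiniteField

variable {F : Type*} [Field F] [Fintype F]

theorem inv_mem_subring (R : Subring F) {x : F} (hx : x ∈ R) : x⁻¹ ∈ R := by
  rcases eq_or_ne x 0 with rfl | hx0
  · simp
  have hcard : 2 ≤ Fintype.card F := Fintype.one_lt_card
  have hinv : x ^ (Fintype.card F - 2) * x = 1 := by
    rw [← pow_succ, show Fintype.card F - 2 + 1 = Fintype.card F - 1 by omega,
      pow_card_sub_one_eq_one x hx0]
  rw [← eq_inv_of_mul_eq_one_left hinv]
  exact R.pow_mem hx _

theorem subfieldClosure_toSubring (s : Set F) :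
    (Subfield.closure s).toSubring = Subring.closure s := by
  let L : Subfield F := { Subring.closure s with inv_mem' := fun _ => inv_mem_subring _ }
  refine le_antisymm (fun x hx => ?_) (Subring.closure_le.2 Subfield.subset_closure)
  exact (Subfield.closure_le (t := L)).2 Subring.subset_closure hx

theorem exists_isPrimitiveRoot {n : ℕ} (hn : n ∣ Fintype.card F - 1) :
    ∃ ζ : F, IsPrimitiveRoot ζ n := by
  classical
  obtain ⟨g, hg⟩ := IsCyclic.exists_ofOrder_eq_natCard (α := Fˣ)
  have hg' : IsPrimitiveRoot (g : F) (Fintype.card F - 1) := by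
    rw [IsPrimitiveRoot.coe_units_iff, ← Fintype.card_units, ← Nat.card_eq_fintype_card, ← hg]
    exact IsPrimitiveRoot.orderOf g
  obtain ⟨m, hm⟩ := hn
  have hcard : 2 ≤ Fintype.card F := Fintype.one_lt_card
  exact ⟨(g : F) ^ m, hg'.pow (by omega) (by rw [hm, mul_comm])⟩

end FiniteField

theorem IsPrimitiveRoot.le_natCard_of_subset {R : Type*} [CommRing R] [IsDomain R] {ζ : R}
    {n : ℕ} (hζ : IsPrimitiveRoot ζ n) {t : Set R} [Finite t] (ht : {x | x ^ n = 1} ⊆ t) :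
    n ≤ Nat.card t := by
  rcases Nat.eq_zero_or_pos n with rfl | hn
  · exact Nat.zero_le _
  calc n = Nat.card (Polynomial.nthRootsFinset n (1 : R)) := by
        rw [Nat.card_eq_fintype_card, Fintype.card_coe, hζ.card_nthRootsFinset]
    _ ≤ Nat.card t := Nat.card_mono (Set.toFinite t) (by rwa [Polynomial.nthRootsFinset_toSet hn])

theorem Subfield.eq_top_of_natCard_lt_sq {F : Type*} [Field F] [Finite F] (K : Subfield F)
    (h : Nat.card F < Nat.card K ^ 2) : K = ⊤ := by
  have hcard : Nat.card F = Nat.card K ^ Module.finrank K F := Module.natCard_eq_pow_finrank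
  have hK : 0 < Nat.card K := Nat.card_pos
  have hrank : Module.finrank K F ≤ 1 := by
    by_contra! hrank
    have : Nat.card K ^ 2 ≤ Nat.card K ^ Module.finrank K F := Nat.pow_le_pow_right hK hrank
    omega
  have hle : Nat.card F ≤ Nat.card K := by
    calc Nat.card F = Nat.card K ^ Module.finrank K F := hcard
      _ ≤ Nat.card K ^ 1 := Nat.pow_le_pow_right hK hrank
      _ = Nat.card K := pow_one _
  exact SetLike.coe_injective (Set.eq_top_of_card_le_of_finite hle)

theorem stmt_15_general (q : ℕ)
    (F : Type*) [Field F] [Fintype F] (hF : Fintype.card F = q ^ 2) :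
    AddSubgroup.closure {s : F | s ^ (q + 1) = 1} = ⊤ ∧
      (SimpleGraph.fromRel fun g h : F =>
        g - h ∈ {s : F | s ^ (q + 1) = 1}).Connected := by
  let M : Submonoid F := MonoidHom.mker (powMonoidHom (q + 1))
  have hM : (M : Set F) = {s : F | s ^ (q + 1) = 1} := rfl
  have hdvd : q + 1 ∣ Fintype.card F - 1 :=
    ⟨q - 1, by simpa [hF] using Nat.sq_sub_sq q 1⟩
  obtain ⟨ζ, hζ⟩ := FiniteField.exists_isPrimitiveRoot hdvd
  have hK : q + 1 ≤ Nat.card (Subfield.closure (M : Set F)) :=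
    hζ.le_natCard_of_subset Subfield.subset_closure
  have htop : Subfield.closure (M : Set F) = ⊤ := by
    refine Subfield.eq_top_of_natCard_lt_sq _ ?_
    rw [Nat.card_eq_fintype_card, hF]
    nlinarith
  have hA : AddSubgroup.closure {s : F | s ^ (q + 1) = 1} = ⊤ := by
    rw [← hM, ← Subring.toAddSubgroup_closure_submonoid, ← FiniteField.subfieldClosure_toSubring,
      htop]
    rfl
  exact ⟨hA, SimpleGraph.connected_fromRel_sub_mem_of_closure_eq_top hA⟩

/-- Let `q` be an odd prime power, `F` the field with `q²` elements, and
`S = {s : s^{q+1} = 1}`. Then `S` generates the additive group of `F`;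
equivalently the Cayley graph `Cay((F,+), S)` is connected. -/
theorem stmt_15 (q : ℕ) (hodd : Odd q) (hq : IsPrimePow q)
    (F : Type*) [Field F] [Fintype F] (hF : Fintype.card F = q ^ 2) :
    AddSubgroup.closure {s : F | s ^ (q + 1) = 1} = ⊤ ∧
      (SimpleGraph.fromRel fun g h : F =>
        g - h ∈ {s : F | s ^ (q + 1) = 1}).Connected :=
  stmt_15_general q F hF
end

section
/- Let p be an odd prime, G = ℤ₅ × ℤ_p × ℤ_p, and S = {(1, a, a²) : a ∈ ℤ_p} ∪ {(−1, −a, −a²) : a ∈ ℤ_p}. Then the Cayley graph Cay(G, S) contains no triangle and no subgraph isomorphic to K_{2,3}, and it is connected. -/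
open SimpleGraph

def SS (p : ℕ) : Set (ZMod 5 × ZMod p × ZMod p) :=
  {x | ∃ a : ZMod p, x = (1, a, a ^ 2)} ∪ {x | ∃ a : ZMod p, x = (-1, -a, -a ^ 2)}

def Gr (p : ℕ) : SimpleGraph (ZMod 5 × ZMod p × ZMod p) :=
  SimpleGraph.fromRel fun g h => g - h ∈ SS p

variable {p : ℕ}

lemma mem_SS_iff {x : ZMod 5 × ZMod p × ZMod p} :
    x ∈ SS p ↔ (∃ a : ZMod p, x = (1, a, a ^ 2)) ∨ (∃ a : ZMod p, x = (-1, -a, -a ^ 2)) := by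
  simp [SS, Set.mem_union, Set.mem_setOf_eq]

lemma neg_mem_SS {x : ZMod 5 × ZMod p × ZMod p} (hx : x ∈ SS p) : -x ∈ SS p := by
  rcases mem_SS_iff.mp hx with ⟨a, rfl⟩ | ⟨a, rfl⟩
  · exact mem_SS_iff.mpr (Or.inr ⟨a, by simp [Prod.ext_iff]⟩)
  · exact mem_SS_iff.mpr (Or.inl ⟨a, by simp [Prod.ext_iff]⟩)

lemma adj_sub_mem {g h : ZMod 5 × ZMod p × ZMod p} (hadj : (Gr p).Adj g h) :
    g - h ∈ SS p := by
  rw [Gr, SimpleGraph.fromRel_adj] at hadj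
  rcases hadj.2 with h1 | h1
  · exact h1
  · simpa using neg_mem_SS h1

lemma adj_fst {g h : ZMod 5 × ZMod p × ZMod p} (hadj : (Gr p).Adj g h) :
    (g - h).1 = 1 ∨ (g - h).1 = -1 := by
  rcases mem_SS_iff.mp (adj_sub_mem hadj) with ⟨a, ha⟩ | ⟨a, ha⟩
  · left; rw [ha]
  · right; rw [ha]

lemma tri_free : (Gr p).CliqueFree 3 := by
  intro t ht
  obtain ⟨x, y, z, hxy, hxz, hyz, rfl⟩ := Finset.card_eq_three.mp ht.2
  have axy : (Gr p).Adj x y := ht.1 (by simp) (by simp) hxy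
  have ayz : (Gr p).Adj y z := ht.1 (by simp) (by simp) hyz
  have axz : (Gr p).Adj x z := ht.1 (by simp) (by simp) hxz
  have hsum : (x - y).1 + (y - z).1 = (x - z).1 := by
    show x.1 - y.1 + (y.1 - z.1) = x.1 - z.1
    ring
  rcases adj_fst axy with h1 | h1 <;> rcases adj_fst ayz with h2 | h2 <;>
    rcases adj_fst axz with h3 | h3 <;> rw [h1, h2, h3] at hsum <;> revert hsum <;> decide

lemma normS {d s t : ZMod 5 × ZMod p × ZMod p} (hs : s ∈ SS p) (ht : t ∈ SS p)
    (hst : s - t = d) :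
    (∃ a b : ZMod p, s = (1, a, a^2) ∧ d = (0, a - b, a^2 - b^2)) ∨
    (∃ a b : ZMod p, s = (-1, -a, -a^2) ∧ d = (0, b - a, b^2 - a^2)) ∨
    (∃ a b : ZMod p, s = (1, a, a^2) ∧ d = (2, a + b, a^2 + b^2)) ∨
    (∃ a b : ZMod p, s = (-1, -a, -a^2) ∧ d = (-2, -a - b, -a^2 - b^2)) := by
  subst hst
  rcases mem_SS_iff.mp hs with ⟨a, rfl⟩ | ⟨a, rfl⟩ <;>
    rcases mem_SS_iff.mp ht with ⟨b, rfl⟩ | ⟨b, rfl⟩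
  · refine Or.inl ⟨a, b, rfl, ?_⟩
    refine Prod.ext ?_ (Prod.ext ?_ ?_) <;> simp <;> ring
  · refine Or.inr (Or.inr (Or.inl ⟨a, b, rfl, ?_⟩))
    refine Prod.ext ?_ (Prod.ext ?_ ?_) <;> simp <;> ring
  · refine Or.inr (Or.inr (Or.inr ⟨a, b, rfl, ?_⟩))
    refine Prod.ext ?_ (Prod.ext ?_ ?_) <;> simp <;> ring
  · refine Or.inr (Or.inl ⟨a, b, rfl, ?_⟩)
    refine Prod.ext ?_ (Prod.ext ?_ ?_) <;> simp <;> ring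

lemma fst_cases {d s t : ZMod 5 × ZMod p × ZMod p} (hs : s ∈ SS p) (ht : t ∈ SS p)
    (hst : s - t = d) : d.1 = 0 ∨ d.1 = 2 ∨ d.1 = -2 := by
  rcases normS hs ht hst with ⟨a,b,_,rfl⟩|⟨a,b,_,rfl⟩|⟨a,b,_,rfl⟩|⟨a,b,_,rfl⟩ <;> simp

lemma normTwo {d s t : ZMod 5 × ZMod p × ZMod p} (hs : s ∈ SS p) (ht : t ∈ SS p)
    (hst : s - t = d) (hd1 : d.1 = 2) :
    ∃ a : ZMod p, s = (1, a, a^2) ∧ 2*a^2 - 2*d.2.1*a = d.2.2 - d.2.1^2 := by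
  rcases normS hs ht hst with ⟨a,b,rfl,rfl⟩|⟨a,b,rfl,rfl⟩|⟨a,b,rfl,rfl⟩|⟨a,b,rfl,rfl⟩
  · exact absurd (show (0:ZMod 5) = 2 from hd1) (by decide)
  · exact absurd (show (0:ZMod 5) = 2 from hd1) (by decide)
  · refine ⟨a, rfl, ?_⟩
    show 2*a^2 - 2*(a+b)*a = (a^2+b^2) - (a+b)^2
    ring
  · exact absurd (show (-2:ZMod 5) = 2 from hd1) (by decide)

lemma normNegTwo {d s t : ZMod 5 × ZMod p × ZMod p} (hs : s ∈ SS p) (ht : t ∈ SS p)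
    (hst : s - t = d) (hd1 : d.1 = -2) :
    ∃ a : ZMod p, s = (-1, -a, -a^2) ∧ 2*a^2 + 2*d.2.1*a = -d.2.2 - d.2.1^2 := by
  rcases normS hs ht hst with ⟨a,b,rfl,rfl⟩|⟨a,b,rfl,rfl⟩|⟨a,b,rfl,rfl⟩|⟨a,b,rfl,rfl⟩
  · exact absurd (show (0:ZMod 5) = -2 from hd1) (by decide)
  · exact absurd (show (0:ZMod 5) = -2 from hd1) (by decide)
  · exact absurd (show (2:ZMod 5) = -2 from hd1) (by decide)
  · refine ⟨a, rfl, ?_⟩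
    show 2*a^2 + 2*(-a-b)*a = -(-a^2-b^2) - (-a-b)^2
    ring

lemma normZero {d s t : ZMod 5 × ZMod p × ZMod p} (hd : d ≠ 0) (hs : s ∈ SS p)
    (ht : t ∈ SS p) (hst : s - t = d) (hd1 : d.1 = 0) :
    d.2.1 ≠ 0 ∧
      ((∃ a : ZMod p, s = (1, a, a^2) ∧ 2*a*d.2.1 = d.2.2 + d.2.1^2) ∨
       (∃ a : ZMod p, s = (-1, -a, -a^2) ∧ 2*a*d.2.1 = d.2.2 - d.2.1^2)) := by
  rcases normS hs ht hst with ⟨a,b,rfl,rfl⟩|⟨a,b,rfl,rfl⟩|⟨a,b,rfl,rfl⟩|⟨a,b,rfl,rfl⟩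
  · have hab : a - b ≠ 0 := by
      intro h
      have hab' : a = b := by linear_combination h
      subst hab'
      exact hd (by simp)
    refine ⟨hab, Or.inl ⟨a, rfl, ?_⟩⟩
    show 2*a*(a-b) = (a^2-b^2) + (a-b)^2
    ring
  · have hab : b - a ≠ 0 := by
      intro h
      have hab' : b = a := by linear_combination h
      subst hab'
      exact hd (by simp)
    refine ⟨hab, Or.inr ⟨a, rfl, ?_⟩⟩
    show 2*a*(b-a) = (b^2-a^2) - (b-a)^2
    ring
  · exact absurd (show (2:ZMod 5) = 0 from hd1) (by decide)
  · exact absurd (show (-2:ZMod 5) = 0 from hd1) (by decide)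

lemma key_s16 [Fact p.Prime] (h2 : (2:ZMod p) ≠ 0) {d s1 t1 s2 t2 s3 t3 : ZMod 5 × ZMod p × ZMod p}
    (hd : d ≠ 0)
    (hs1 : s1 ∈ SS p) (ht1 : t1 ∈ SS p) (e1 : s1 - t1 = d)
    (hs2 : s2 ∈ SS p) (ht2 : t2 ∈ SS p) (e2 : s2 - t2 = d)
    (hs3 : s3 ∈ SS p) (ht3 : t3 ∈ SS p) (e3 : s3 - t3 = d) :
    s1 = s2 ∨ s1 = s3 ∨ s2 = s3 := by
  have quad : ∀ m C x y z : ZMod p, 2*x^2 + m*x = C → 2*y^2 + m*y = C →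
      2*z^2 + m*z = C → x = y ∨ x = z ∨ y = z := by
    intro m C x y z hx hy hz
    have pair : ∀ u v : ZMod p, 2*u^2 + m*u = C → 2*v^2 + m*v = C → u ≠ v →
        2*(u + v) = -m := by
      intro u v hu hv huv
      have h0 : (u - v) * (2*(u + v) + m) = 0 := by linear_combination hu - hv
      rcases mul_eq_zero.mp h0 with h | h
      · exact absurd (sub_eq_zero.mp h) huv
      · linear_combination h
    by_cases hxy : x = y
    · exact Or.inl hxy
    by_cases hxz : x = z
    · exact Or.inr (Or.inl hxz)
    refine Or.inr (Or.inr ?_)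
    have h1 := pair x y hx hy hxy
    have h2' := pair x z hx hz hxz
    have : 2*y = 2*z := by linear_combination h1 - h2'
    exact mul_left_cancel₀ h2 this
  rcases fst_cases hs1 ht1 e1 with hd1 | hd1 | hd1
  · -- d.1 = 0
    obtain ⟨hd2, hc1⟩ := normZero hd hs1 ht1 e1 hd1
    obtain ⟨-, hc2⟩ := normZero hd hs2 ht2 e2 hd1
    obtain ⟨-, hc3⟩ := normZero hd hs3 ht3 e3 hd1
    have cancel : ∀ a a' : ZMod p, ∀ C : ZMod p, 2*a*d.2.1 = C → 2*a'*d.2.1 = C → a = a' := by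
      intro a a' C ha ha'
      have : (2*a) * d.2.1 = (2*a') * d.2.1 := by linear_combination ha - ha'
      exact mul_left_cancel₀ h2 (mul_right_cancel₀ hd2 this)
    rcases hc1 with ⟨a1, r1, q1⟩ | ⟨a1, r1, q1⟩ <;> rcases hc2 with ⟨a2, r2, q2⟩ | ⟨a2, r2, q2⟩ <;>
      rcases hc3 with ⟨a3, r3, q3⟩ | ⟨a3, r3, q3⟩
    · exact Or.inl (by rw [r1, r2, cancel a1 a2 _ q1 q2])
    · exact Or.inl (by rw [r1, r2, cancel a1 a2 _ q1 q2])
    · exact Or.inr (Or.inl (by rw [r1, r3, cancel a1 a3 _ q1 q3]))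
    · exact Or.inr (Or.inr (by rw [r2, r3, cancel a2 a3 _ q2 q3]))
    · exact Or.inr (Or.inr (by rw [r2, r3, cancel a2 a3 _ q2 q3]))
    · exact Or.inr (Or.inl (by rw [r1, r3, cancel a1 a3 _ q1 q3]))
    · exact Or.inl (by rw [r1, r2, cancel a1 a2 _ q1 q2])
    · exact Or.inl (by rw [r1, r2, cancel a1 a2 _ q1 q2])
  · -- d.1 = 2
    obtain ⟨a1, r1, q1⟩ := normTwo hs1 ht1 e1 hd1
    obtain ⟨a2, r2, q2⟩ := normTwo hs2 ht2 e2 hd1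
    obtain ⟨a3, r3, q3⟩ := normTwo hs3 ht3 e3 hd1
    have := quad (-(2*d.2.1)) (d.2.2 - d.2.1^2) a1 a2 a3
      (by linear_combination q1) (by linear_combination q2) (by linear_combination q3)
    rcases this with h | h | h
    · exact Or.inl (by rw [r1, r2, h])
    · exact Or.inr (Or.inl (by rw [r1, r3, h]))
    · exact Or.inr (Or.inr (by rw [r2, r3, h]))
  · -- d.1 = -2
    obtain ⟨a1, r1, q1⟩ := normNegTwo hs1 ht1 e1 hd1
    obtain ⟨a2, r2, q2⟩ := normNegTwo hs2 ht2 e2 hd1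
    obtain ⟨a3, r3, q3⟩ := normNegTwo hs3 ht3 e3 hd1
    have := quad (2*d.2.1) (-d.2.2 - d.2.1^2) a1 a2 a3
      (by linear_combination q1) (by linear_combination q2) (by linear_combination q3)
    rcases this with h | h | h
    · exact Or.inl (by rw [r1, r2, h])
    · exact Or.inr (Or.inl (by rw [r1, r3, h]))
    · exact Or.inr (Or.inr (by rw [r2, r3, h]))

lemma k23_free (hp : p.Prime) (h2 : (2:ZMod p) ≠ 0) :
    ¬ hasSubgraphCopy (completeBipartiteGraph (Fin 2) (Fin 3)) (Gr p) := by
  haveI := Fact.mk hp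
  rintro ⟨f, hinj, hadj⟩
  have adj : ∀ j : Fin 3, (Gr p).Adj (f (Sum.inl 0)) (f (Sum.inr j)) ∧
      (Gr p).Adj (f (Sum.inl 1)) (f (Sum.inr j)) := by
    intro j
    constructor <;> apply hadj <;> simp
  have hd : f (Sum.inl 0) - f (Sum.inl 1) ≠ 0 := by
    rw [sub_ne_zero]
    intro h
    exact absurd (hinj h) (by decide)
  have hs : ∀ j : Fin 3, f (Sum.inl 0) - f (Sum.inr j) ∈ SS p :=
    fun j => adj_sub_mem (adj j).1
  have ht : ∀ j : Fin 3, f (Sum.inl 1) - f (Sum.inr j) ∈ SS p :=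
    fun j => adj_sub_mem (adj j).2
  have he : ∀ j : Fin 3, (f (Sum.inl 0) - f (Sum.inr j)) - (f (Sum.inl 1) - f (Sum.inr j)) =
      f (Sum.inl 0) - f (Sum.inl 1) := fun j => by ring
  have hvne : ∀ j j' : Fin 3, j ≠ j' →
      f (Sum.inl 0) - f (Sum.inr j) ≠ f (Sum.inl 0) - f (Sum.inr j') := by
    intro j j' hjj h
    have : f (Sum.inr j) = f (Sum.inr j') := by
      rwa [sub_right_inj] at h
    exact hjj (by simpa using hinj this)
  rcases key_s16 h2 hd (hs 0) (ht 0) (he 0) (hs 1) (ht 1) (he 1) (hs 2) (ht 2) (he 2) with h | h | h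
  · exact hvne 0 1 (by decide) h
  · exact hvne 0 2 (by decide) h
  · exact hvne 1 2 (by decide) h

def transHom (u : ZMod 5 × ZMod p × ZMod p) : Gr p →g Gr p where
  toFun g := g + u
  map_rel' := by
    intro a b hab
    rw [Gr, SimpleGraph.fromRel_adj] at hab ⊢
    refine ⟨fun h => hab.1 (by simpa using add_right_cancel h), ?_⟩
    rcases hab.2 with h | h
    · exact Or.inl (by simpa using h)
    · exact Or.inr (by simpa using h)

lemma reach_step (g s : ZMod 5 × ZMod p × ZMod p) (hs : s ∈ SS p) :
    (Gr p).Reachable g (g + s) := by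
  have hs0 : s ≠ 0 := by
    rcases mem_SS_iff.mp hs with ⟨a, rfl⟩ | ⟨a, rfl⟩ <;>
      · intro h
        have h1 := congrArg Prod.fst h
        simp at h1
        exact absurd h1 (by decide)
  refine SimpleGraph.Adj.reachable ?_
  rw [Gr, SimpleGraph.fromRel_adj]
  exact ⟨fun h => hs0 (left_eq_add.mp h), Or.inr (by simpa using hs)⟩

@[simp] lemma transHom_apply (u g : ZMod 5 × ZMod p × ZMod p) : transHom u g = g + u := rfl

lemma reach_zero (hp : p.Prime) (h2 : (2:ZMod p) ≠ 0) (v : ZMod 5 × ZMod p × ZMod p) :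
    (Gr p).Reachable 0 v := by
  haveI := Fact.mk hp
  obtain ⟨x, y, z⟩ := v
  have hn : ∀ n : ℕ, (Gr p).Reachable 0 ((n : ZMod 5), 0, 0) := by
    intro n
    induction n with
    | zero => exact SimpleGraph.Reachable.refl _
    | succ n ih =>
        have heq : (((n + 1 : ℕ) : ZMod 5), (0:ZMod p), (0:ZMod p)) =
            ((n : ZMod 5), (0:ZMod p), (0:ZMod p)) + (1, 0, 0^2) := by
          refine Prod.ext ?_ (Prod.ext ?_ ?_)
          · show ((n + 1 : ℕ) : ZMod 5) = (n : ZMod 5) + 1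
            push_cast
            ring
          · show (0:ZMod p) = 0 + 0
            simp
          · show (0:ZMod p) = 0 + 0^2
            simp
        rw [heq]
        exact ih.trans (reach_step _ _ (mem_SS_iff.mpr (Or.inl ⟨0, rfl⟩)))
  have h0 : ∀ y z : ZMod p, (Gr p).Reachable 0 ((0 : ZMod 5), y, z) := by
    intro y z
    obtain ⟨b, hb2⟩ : ∃ b : ZMod p, 2 * b = y^2 + 2*y - z :=
      ⟨(y^2 + 2*y - z) / 2, by field_simp⟩
    have m1 : ((1:ZMod 5), y+1, (y+1)^2) ∈ SS p := mem_SS_iff.mpr (Or.inl ⟨y+1, rfl⟩)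
    have m2 : ((1:ZMod 5), b, b^2) ∈ SS p := mem_SS_iff.mpr (Or.inl ⟨b, rfl⟩)
    have m3 : ((-1:ZMod 5), -(b+1), -(b+1)^2) ∈ SS p := mem_SS_iff.mpr (Or.inr ⟨b+1, rfl⟩)
    have m4 : ((-1:ZMod 5), -(0:ZMod p), -(0:ZMod p)^2) ∈ SS p := mem_SS_iff.mpr (Or.inr ⟨0, rfl⟩)
    have r : (Gr p).Reachable 0
        ((((0 + ((1:ZMod 5), y+1, (y+1)^2)) + (1, b, b^2)) + (-1, -(b+1), -(b+1)^2)) +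
          (-1, -0, -0^2)) :=
      (((reach_step _ _ m1).trans (reach_step _ _ m2)).trans (reach_step _ _ m3)).trans
        (reach_step _ _ m4)
    have heq : ((((0 + ((1:ZMod 5), y+1, (y+1)^2)) + (1, b, b^2)) + (-1, -(b+1), -(b+1)^2)) +
          (-1, -0, -0^2)) = ((0 : ZMod 5), y, z) := by
      refine Prod.ext ?_ (Prod.ext ?_ ?_)
      · show (0:ZMod 5) + 1 + 1 + -1 + -1 = 0
        decide
      · show (0:ZMod p) + (y+1) + b + -(b+1) + -0 = y
        ring
      · show (0:ZMod p) + (y+1)^2 + b^2 + -(b+1)^2 + -0^2 = z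
        linear_combination -hb2
    rwa [heq] at r
  have hx : (Gr p).Reachable 0 (x, (0:ZMod p), (0:ZMod p)) := by
    have := hn x.val
    rwa [ZMod.natCast_rightInverse x] at this
  refine hx.trans ?_
  have h := SimpleGraph.Reachable.map (transHom (x, (0:ZMod p), (0:ZMod p))) (h0 y z)
  have e1 : transHom ((x, (0:ZMod p), (0:ZMod p))) 0 = (x, (0:ZMod p), (0:ZMod p)) := by
    simp
  have e2 : transHom ((x, (0:ZMod p), (0:ZMod p))) ((0:ZMod 5), y, z) = (x, y, z) := by
    rw [transHom_apply]
    refine Prod.ext ?_ (Prod.ext ?_ ?_)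
    · show (0:ZMod 5) + x = x
      simp
    · show y + 0 = y
      simp
    · show z + 0 = z
      simp
  rwa [e1, e2] at h


/-- For an odd prime `p`, the Cayley graph of `ℤ₅ × ℤ_p × ℤ_p` with connection
set `S = {(1,a,a²)} ∪ {(−1,−a,−a²)}` is triangle-free, `K_{2,3}`-free and
connected. -/
theorem stmt_16 (p : ℕ) (hp : p.Prime) (hodd : Odd p) :
    ((SimpleGraph.fromRel fun g h : ZMod 5 × ZMod p × ZMod p =>
        g - h ∈ ({x | ∃ a : ZMod p, x = (1, a, a ^ 2)} ∪
          {x | ∃ a : ZMod p, x = (-1, -a, -a ^ 2)})).CliqueFree 3) ∧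
      ¬ hasSubgraphCopy (completeBipartiteGraph (Fin 2) (Fin 3))
        (SimpleGraph.fromRel fun g h : ZMod 5 × ZMod p × ZMod p =>
          g - h ∈ ({x | ∃ a : ZMod p, x = (1, a, a ^ 2)} ∪
            {x | ∃ a : ZMod p, x = (-1, -a, -a ^ 2)})) ∧
      (SimpleGraph.fromRel fun g h : ZMod 5 × ZMod p × ZMod p =>
        g - h ∈ ({x | ∃ a : ZMod p, x = (1, a, a ^ 2)} ∪
          {x | ∃ a : ZMod p, x = (-1, -a, -a ^ 2)})).Connected := by
  haveI := Fact.mk hp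
  have hne2 : p ≠ 2 := by
    rintro rfl
    exact (by norm_num : ¬ Odd 2) hodd
  have h2 : (2 : ZMod p) ≠ 0 := by
    rw [show (2 : ZMod p) = ((2 : ℕ) : ZMod p) by norm_cast, Ne,
      ZMod.natCast_eq_zero_iff]
    intro hdvd
    have hle : p ≤ 2 := Nat.le_of_dvd (by norm_num) hdvd
    interval_cases p
    · exact absurd hp (by norm_num)
    · exact absurd hp (by norm_num)
    · exact hne2 rfl
  refine ⟨tri_free, k23_free hp h2, ?_⟩
  exact SimpleGraph.Connected.mk
    (fun u v => ((reach_zero hp h2 u).symm.trans (reach_zero hp h2 v)))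
end

section
/- Let p be an odd prime. If s₁, s₂, s₃, s₄ ∈ S := {(1,a,a²) : a ∈ ℤ_p} ∪ {(−1,−a,−a²) : a ∈ ℤ_p} satisfy s₁ + s₂ + s₃ + s₄ = 0 in ℤ₅ × ℤ_p × ℤ_p, then the multiset {s₁,s₂,s₃,s₄} equals {s, s', −s, −s'} for some s, s' ∈ S. -/
section msw
variable {α : Type*} (a b c d : α)
lemma msw12 : ({a,b,c,d} : Multiset α) = {b,a,c,d} := Multiset.cons_swap a b {c,d}
lemma msw23 : ({a,b,c,d} : Multiset α) = {a,c,b,d} := congrArg (a ::ₘ ·) (Multiset.cons_swap b c {d})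
lemma msw34 : ({a,b,c,d} : Multiset α) = {a,b,d,c} :=
  congrArg (fun t => a ::ₘ b ::ₘ t) (Multiset.cons_swap c d 0)
end msw

lemma core_17 (p : ℕ) (hp : p.Prime) (hodd : Odd p) (a b c d : ZMod p)
    (h2 : a + b = c + d) (h3 : a ^ 2 + b ^ 2 = c ^ 2 + d ^ 2) :
    (c = a ∧ d = b) ∨ (c = b ∧ d = a) := by
  haveI : Fact p.Prime := ⟨hp⟩
  have hne : p ≠ 2 := by rintro rfl; exact (by decide : ¬ Odd 2) hodd
  have hp2 : (2 : ZMod p) ≠ 0 := by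
    intro h
    have : ((2 : ℕ) : ZMod p) = 0 := by exact_mod_cast h
    exact hne ((Nat.prime_dvd_prime_iff_eq hp Nat.prime_two).mp
      ((ZMod.natCast_eq_zero_iff 2 p).mp this))
  have hab : a * b = c * d := by
    have h : 2 * (a * b) = 2 * (c * d) := by linear_combination (a + b + c + d) * h2 - h3
    exact mul_left_cancel₀ hp2 h
  have hz : (a - c) * (a - d) = 0 := by linear_combination a * h2 - hab
  rcases mul_eq_zero.mp hz with h | h
  · have hac : a = c := by linear_combination h
    exact Or.inl ⟨hac.symm, by linear_combination hac - h2⟩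
  · have had : a = d := by linear_combination h
    exact Or.inr ⟨by linear_combination had - h2, had.symm⟩

/-- For an odd prime `p`, any zero-sum quadruple from
`S = {(1,a,a²)} ∪ {(−1,−a,−a²)} ⊆ ℤ₅ × ℤ_p × ℤ_p` is trivial: the multiset
`{s₁,s₂,s₃,s₄}` equals `{s, s', −s, −s'}` for some `s, s' ∈ S`. -/
theorem stmt_17 (p : ℕ) (hp : p.Prime) (hodd : Odd p)
    (S : Set (ZMod 5 × ZMod p × ZMod p))
    (hS : S = {x | ∃ a : ZMod p, x = (1, a, a ^ 2)} ∪
      {x | ∃ a : ZMod p, x = (-1, -a, -a ^ 2)})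
    (s₁ s₂ s₃ s₄ : ZMod 5 × ZMod p × ZMod p)
    (h₁ : s₁ ∈ S) (h₂ : s₂ ∈ S) (h₃ : s₃ ∈ S) (h₄ : s₄ ∈ S)
    (hsum : s₁ + s₂ + s₃ + s₄ = 0) :
    ∃ s ∈ S, ∃ s' ∈ S,
      ({s₁, s₂, s₃, s₄} : Multiset (ZMod 5 × ZMod p × ZMod p)) = {s, s', -s, -s'} := by
  subst hS
  simp only [Set.mem_union, Set.mem_setOf_eq] at h₁ h₂ h₃ h₄
  obtain ⟨a, rfl⟩ | ⟨a, rfl⟩ := h₁ <;> obtain ⟨b, rfl⟩ | ⟨b, rfl⟩ := h₂ <;>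
    obtain ⟨c, rfl⟩ | ⟨c, rfl⟩ := h₃ <;> obtain ⟨d, rfl⟩ | ⟨d, rfl⟩ := h₄ <;>
    [skip; skip; skip; skip; skip; skip; skip; skip; skip; skip;
     skip; skip; skip; skip; skip; skip] <;>
  (try (have e1 := congrArg Prod.fst hsum; simp at e1; exact absurd e1 (by decide))) <;>
  (have e2 := congrArg (fun x => x.2.1) hsum;
   have e3 := congrArg (fun x => x.2.2) hsum;
   simp at e2 e3)
  -- Case (+,+,-,-)
  · rcases core_17 p hp hodd a b c d (by linear_combination e2) (by linear_combination e3) with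
      ⟨rfl, rfl⟩ | ⟨rfl, rfl⟩
    · exact ⟨_, Or.inl ⟨_, rfl⟩, _, Or.inl ⟨_, rfl⟩, by simp only [Prod.neg_mk, neg_neg]; rfl⟩
    · exact ⟨_, Or.inl ⟨_, rfl⟩, _, Or.inl ⟨_, rfl⟩, by
        simp only [Prod.neg_mk, neg_neg]; exact msw34 _ _ _ _⟩
  -- Case (+,-,+,-)
  · rcases core_17 p hp hodd a c b d (by linear_combination e2) (by linear_combination e3) with
      ⟨rfl, rfl⟩ | ⟨rfl, rfl⟩
    · exact ⟨_, Or.inl ⟨_, rfl⟩, _, Or.inl ⟨_, rfl⟩, by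
        simp only [Prod.neg_mk, neg_neg]; exact msw23 _ _ _ _⟩
    · exact ⟨_, Or.inl ⟨_, rfl⟩, _, Or.inr ⟨_, rfl⟩, by
        simp only [Prod.neg_mk, neg_neg]; exact msw34 _ _ _ _⟩
  -- Case (+,-,-,+)
  · rcases core_17 p hp hodd a d b c (by linear_combination e2) (by linear_combination e3) with
      ⟨rfl, rfl⟩ | ⟨rfl, rfl⟩
    · exact ⟨_, Or.inl ⟨_, rfl⟩, _, Or.inr ⟨_, rfl⟩, by
        simp only [Prod.neg_mk, neg_neg]; exact msw23 _ _ _ _⟩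
    · exact ⟨_, Or.inl ⟨_, rfl⟩, _, Or.inr ⟨_, rfl⟩, by simp only [Prod.neg_mk, neg_neg]; rfl⟩
  -- Case (-,+,+,-)
  · rcases core_17 p hp hodd b c a d (by linear_combination e2) (by linear_combination e3) with
      ⟨rfl, rfl⟩ | ⟨rfl, rfl⟩
    · exact ⟨_, Or.inr ⟨_, rfl⟩, _, Or.inl ⟨_, rfl⟩, by
        simp only [Prod.neg_mk, neg_neg]; exact msw23 _ _ _ _⟩
    · exact ⟨_, Or.inr ⟨_, rfl⟩, _, Or.inl ⟨_, rfl⟩, by simp only [Prod.neg_mk, neg_neg]; rfl⟩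
  -- Case (-,+,-,+)
  · rcases core_17 p hp hodd b d a c (by linear_combination e2) (by linear_combination e3) with
      ⟨rfl, rfl⟩ | ⟨rfl, rfl⟩
    · exact ⟨_, Or.inr ⟨_, rfl⟩, _, Or.inr ⟨_, rfl⟩, by
        simp only [Prod.neg_mk, neg_neg]; exact msw23 _ _ _ _⟩
    · exact ⟨_, Or.inr ⟨_, rfl⟩, _, Or.inl ⟨_, rfl⟩, by
        simp only [Prod.neg_mk, neg_neg]; exact msw34 _ _ _ _⟩
  -- Case (-,-,+,+)
  · rcases core_17 p hp hodd c d a b (by linear_combination e2) (by linear_combination e3) with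
      ⟨rfl, rfl⟩ | ⟨rfl, rfl⟩
    · exact ⟨_, Or.inr ⟨_, rfl⟩, _, Or.inr ⟨_, rfl⟩, by simp only [Prod.neg_mk, neg_neg]; rfl⟩
    · exact ⟨_, Or.inr ⟨_, rfl⟩, _, Or.inr ⟨_, rfl⟩, by
        simp only [Prod.neg_mk, neg_neg]; exact msw34 _ _ _ _⟩
end
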